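/- arXiv:1109.5007 — 11 statements merged into one kernel-verified Lean document; each statement's English description precedes it below -/
import Mathlib

section
/- Let G and H be finite non-abelian groups, and let φ: Γ_G → Γ_H be an isomorphism of their non-commuting graphs. For every g ∈ G \ Z(G) with h = φ(g), we have |C_H(h)| = |C_G(g)| + |Z(H)| - |Z(G)|. -/
open Subgroup

/-- An isomorphism of non-commuting graphs: a bijection between the non-central
elements preserving adjacency (`x` adjacent to `y` iff `x*y ≠ y*x`), equivalently
preserving commutativity. -/
def NCGraphIso (G H : Type*) [Group G] [Group H] :=
  { e : {x : G // x ∉ center G} ≃ {y : H // y ∉ center H} //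
      ∀ a b, Commute a.1 b.1 ↔ Commute (e a).1 (e b).1 }

lemma ncg_aux (K : Type*) [Group K] [Finite K] (k : K) :
    Nat.card (centralizer {k} : Subgroup K) =
      Nat.card {x : {x : K // x ∉ center K} // Commute x.1 k} + Nat.card (center K) := by
  classical
  have hsub : (center K : Set K) ⊆ ((centralizer {k} : Subgroup K) : Set K) :=
    fun x hx => Subgroup.center_le_centralizer {k} hx
  have e1 : ((center K : Set K) ⊕ (((centralizer {k} : Subgroup K) : Set K) \ (center K) : Set K))
      ≃ ((centralizer {k} : Subgroup K) : Set K) := Equiv.Set.sumDiffSubset hsub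
  have e2 : ((((centralizer {k} : Subgroup K) : Set K) \ (center K) : Set K)) ≃
      {x : {x : K // x ∉ center K} // Commute x.1 k} :=
    { toFun := fun x => ⟨⟨x.1, x.2.2⟩, by
        have hx := x.2.1
        rw [SetLike.mem_coe, mem_centralizer_singleton_iff] at hx
        exact hx⟩
      invFun := fun y => ⟨y.1.1, ⟨by
        rw [SetLike.mem_coe, mem_centralizer_singleton_iff]; exact y.2, y.1.2⟩⟩
      left_inv := fun x => rfl
      right_inv := fun y => rfl }
  have := Nat.card_congr (e1.symm.trans (Equiv.sumComm _ _))
  rw [Nat.card_sum, Nat.card_congr e2] at this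
  simpa using this

theorem stmt1 (G H : Type*) [Group G] [Group H] [Finite G] [Finite H]
    (hG : ¬ ∀ a b : G, a * b = b * a) (hH : ¬ ∀ a b : H, a * b = b * a)
    (φ : NCGraphIso G H) (g : G) (hg : g ∉ center G) :
    (Nat.card (centralizer {(φ.1 ⟨g, hg⟩).1} : Subgroup H) : ℤ) =
      Nat.card (centralizer {g} : Subgroup G) + Nat.card (center H) - Nat.card (center G) := by
  classical
  obtain ⟨e, he⟩ := φ
  set h : H := (e ⟨g, hg⟩).1 with hh
  have key : {x : {x : G // x ∉ center G} // Commute x.1 g} ≃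
      {y : {y : H // y ∉ center H} // Commute y.1 h} :=
    { toFun := fun x => ⟨e x.1, (he x.1 ⟨g, hg⟩).mp x.2⟩
      invFun := fun y => ⟨e.symm y.1, by
        have := (he (e.symm y.1) ⟨g, hg⟩).mpr
        apply this
        simpa [hh] using y.2⟩
      left_inv := fun x => by simp
      right_inv := fun y => by simp }
  have h1 := ncg_aux G g
  have h2 := ncg_aux H h
  rw [Nat.card_congr key] at h1
  simp only [hh] at h1 h2 ⊢
  omega
end

section
/- Let G and H be finite non-abelian groups with an isomorphism φ: Γ_G → Γ_H of their non-commuting graphs, and let g ∈ G \ Z(G) with h = φ(g). Then |C_H(h)| divides (|g^G| - 1) · (|Z(H)| - |Z(G)|), where g^G denotes the conjugacy class of g in G. -/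
open Subgroup

lemma card_add_compl' {α : Type*} [Finite α] (p : α → Prop) :
    Nat.card {x // p x} + Nat.card {x // ¬ p x} = Nat.card α := by
  classical
  rw [← Nat.card_sum]
  exact Nat.card_congr (Equiv.sumCompl p)

/-- split centralizer card -/
lemma centralizer_card_split' {G : Type*} [Group G] [Finite G] (g : G) :
    Nat.card (centralizer {g} : Subgroup G)
      = Nat.card (center G) + Nat.card {x : {x : G // x ∉ center G} // Commute g x.1} := by
  classical
  have h := card_add_compl' (α := (centralizer {g} : Subgroup G))
      (fun x => (x : G) ∈ center G)
  rw [← h]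
  congr 1
  · refine Nat.card_congr ((Equiv.subtypeSubtypeEquivSubtypeInter _ _).trans
      (Equiv.subtypeEquivRight fun x => ?_))
    exact ⟨fun h => h.2, fun h => ⟨center_le_centralizer {g} h, h⟩⟩
  · exact Nat.card_congr
      { toFun := fun x => ⟨⟨x.1.1, x.2⟩, by
          have := x.1.2
          rw [mem_centralizer_singleton_iff] at this
          exact (Commute.symm this)⟩
        invFun := fun y => ⟨⟨y.1.1, by
          rw [mem_centralizer_singleton_iff]
          exact y.2.symm⟩, y.1.2⟩
        left_inv := fun x => rfl
        right_inv := fun y => rfl }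

theorem stmt2 (G H : Type*) [Group G] [Group H] [Finite G] [Finite H]
    (hG : ¬ ∀ a b : G, a * b = b * a) (hH : ¬ ∀ a b : H, a * b = b * a)
    (φ : NCGraphIso G H) (g : G) (hg : g ∉ center G) :
    (Nat.card (centralizer {(φ.1 ⟨g, hg⟩).1} : Subgroup H) : ℤ) ∣
      ((Nat.card (MulAction.orbit (ConjAct G) g) : ℤ) - 1) *
        ((Nat.card (center H) : ℤ) - Nat.card (center G)) := by
  classical
  obtain ⟨e, he⟩ := φ
  set h : H := (e ⟨g, hg⟩).1 with hh
  have hnc : Nat.card {x : G // x ∉ center G} = Nat.card {y : H // y ∉ center H} :=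
    Nat.card_congr e
  have h1 : Nat.card {x : G // x ∉ center G} + Nat.card (center G) = Nat.card G := by
    have := card_add_compl' (α := G) (fun x => x ∉ center G)
    simpa [not_not] using this
  have h2 : Nat.card {y : H // y ∉ center H} + Nat.card (center H) = Nat.card H := by
    have := card_add_compl' (α := H) (fun y => y ∉ center H)
    simpa [not_not] using this
  have hcomm : Nat.card {x : {x : G // x ∉ center G} // Commute g x.1}
      = Nat.card {y : {y : H // y ∉ center H} // Commute h y.1} := by
    refine Nat.card_congr (Equiv.subtypeEquiv e fun x => ?_)
    exact he ⟨g, hg⟩ x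
  have hcG := centralizer_card_split' g
  have hcH := centralizer_card_split' h
  -- orbit-stabilizer
  have hstab : Nat.card (centralizer {g} : Subgroup G)
      = Nat.card (MulAction.stabilizer (ConjAct G) g) := by
    refine Nat.card_congr (Equiv.subtypeEquiv ConjAct.toConjAct.toEquiv fun x => ?_)
    rw [Subgroup.centralizer_eq_comap_stabilizer]
    rfl
  have horb : Nat.card (MulAction.orbit (ConjAct G) g)
      * Nat.card (centralizer {g} : Subgroup G) = Nat.card G := by
    rw [Nat.card_congr (MulAction.orbitEquivQuotientStabilizer (ConjAct G) g), hstab,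
      ← Subgroup.card_eq_card_quotient_mul_card_subgroup]
    exact Nat.card_congr ConjAct.toConjAct.toEquiv.symm
  obtain ⟨k, hk⟩ : Nat.card (centralizer {h} : Subgroup H) ∣ Nat.card H :=
    Subgroup.card_subgroup_dvd_card _
  refine ⟨(Nat.card (MulAction.orbit (ConjAct G) g) : ℤ) - k, ?_⟩
  have e1 : ((Nat.card {x : G // x ∉ center G} : ℤ)) + Nat.card (center G) = Nat.card G := by
    exact_mod_cast h1
  have e2 : ((Nat.card {y : H // y ∉ center H} : ℤ)) + Nat.card (center H) = Nat.card H := by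
    exact_mod_cast h2
  have e3 : (Nat.card (centralizer {g} : Subgroup G) : ℤ)
      = Nat.card (center G) + Nat.card {x : {x : G // x ∉ center G} // Commute g x.1} := by
    exact_mod_cast hcG
  have e4 : (Nat.card (centralizer {h} : Subgroup H) : ℤ)
      = Nat.card (center H) + Nat.card {y : {y : H // y ∉ center H} // Commute h y.1} := by
    exact_mod_cast hcH
  have e5 : (Nat.card (MulAction.orbit (ConjAct G) g) : ℤ)
      * Nat.card (centralizer {g} : Subgroup G) = Nat.card G := by exact_mod_cast horb
  have e6 : (Nat.card H : ℤ) = Nat.card (centralizer {h} : Subgroup H) * k := by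
    exact_mod_cast hk
  have e7 : ((Nat.card {x : G // x ∉ center G} : ℤ))
      = Nat.card {y : H // y ∉ center H} := by exact_mod_cast hnc
  have e8 : ((Nat.card {x : {x : G // x ∉ center G} // Commute g x.1} : ℤ))
      = Nat.card {y : {y : H // y ∉ center H} // Commute h y.1} := by exact_mod_cast hcomm
  linear_combination (-(Nat.card (MulAction.orbit (ConjAct G) g) : ℤ)) * e4 - e6
    + (Nat.card (MulAction.orbit (ConjAct G) g) : ℤ) * e8 - e5 + e1 - e7
    + (Nat.card (MulAction.orbit (ConjAct G) g) : ℤ) * e3 - e2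
end

section
/- Let G and H be finite non-abelian groups with isomorphic non-commuting graphs. If |Z(G)| ≥ |Z(H)| and G contains a non-central element g with |C_G(g)|² ≥ |G| · |Z(G)|, then |G| = |H|. -/
open Subgroup

lemma card_compl_subgroup {G : Type*} [Group G] [Finite G] (K : Subgroup G) :
    Nat.card {x : G // x ∉ K} = Nat.card G - Nat.card K := by
  classical
  have : Fintype G := Fintype.ofFinite G
  simp only [Nat.card_eq_fintype_card]
  exact Fintype.card_subtype_compl _

lemma card_diff_subgroup {G : Type*} [Group G] [Finite G] (K L : Subgroup G) (h : L ≤ K) :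
    Nat.card {x : G // x ∈ K ∧ x ∉ L} = Nat.card K - Nat.card L := by
  classical
  have e : {x : G // x ∈ K ∧ x ∉ L} ≃ ((K : Set G) \ (L : Set G) : Set G) :=
    Equiv.subtypeEquivRight (by intro x; simp [Set.mem_diff])
  rw [Nat.card_congr e, Nat.card_coe_set_eq, Set.ncard_diff (by exact_mod_cast h)]
  rw [← Nat.card_coe_set_eq, ← Nat.card_coe_set_eq]
  rfl

theorem stmt3 (G H : Type*) [Group G] [Group H] [Finite G] [Finite H]
    (hG : ¬ ∀ a b : G, a * b = b * a) (hH : ¬ ∀ a b : H, a * b = b * a)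
    (φ : NCGraphIso G H)
    (hZ : Nat.card (center H) ≤ Nat.card (center G))
    (g : G) (hg : g ∉ center G)
    (hC : Nat.card G * Nat.card (center G) ≤ (Nat.card (centralizer {g} : Subgroup G)) ^ 2) :
    Nat.card G = Nat.card H := by
  classical
  obtain ⟨e, he⟩ := φ
  set n := Nat.card G with hn
  set m := Nat.card H with hm
  set z := Nat.card (center G) with hz
  set w := Nat.card (center H) with hw
  set g0 : {x : G // x ∉ center G} := ⟨g, hg⟩ with hg0
  set g' : H := (e g0).1 with hg'def
  have hg' : g' ∉ center H := (e g0).2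
  set c := Nat.card (centralizer {g} : Subgroup G) with hc
  set c' := Nat.card (centralizer {g'} : Subgroup H) with hc'
  -- equality of vertex counts
  have h1 : n - z = m - w := by
    rw [← card_compl_subgroup (center G), ← card_compl_subgroup (center H)]
    exact Nat.card_congr e
  -- equality of "commuting neighbourhood" counts
  have h2 : c - z = c' - w := by
    rw [← card_diff_subgroup _ _ (center_le_centralizer ({g} : Set G)),
        ← card_diff_subgroup _ _ (center_le_centralizer ({g'} : Set H))]
    refine Nat.card_congr ?_
    calc {x : G // x ∈ centralizer {g} ∧ x ∉ center G}
        ≃ {a : {x : G // x ∉ center G} // Commute g a.1} := by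
          refine (Equiv.subtypeEquivRight (q := fun x => x ∉ center G ∧ Commute g x) ?_).trans
            (Equiv.subtypeSubtypeEquivSubtypeInter _ _).symm
          intro a
          simp only [mem_centralizer_singleton_iff, and_comm, Commute, SemiconjBy]
          rw [eq_comm]
      _ ≃ {b : {y : H // y ∉ center H} // Commute g' b.1} :=
          e.subtypeEquiv (fun a => he g0 a)
      _ ≃ {y : H // y ∈ centralizer {g'} ∧ y ∉ center H} := by
          refine (Equiv.subtypeSubtypeEquivSubtypeInter _ _).trans
            (Equiv.subtypeEquivRight ?_)
          intro b
          simp only [mem_centralizer_singleton_iff, and_comm, Commute, SemiconjBy]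
          rw [eq_comm]
  -- basic facts
  have hz1 : 0 < z := Nat.card_pos
  have hw1 : 0 < w := Nat.card_pos
  have hn1 : 0 < n := Nat.card_pos
  have hm1 : 0 < m := Nat.card_pos
  have hzn : z ∣ n := card_subgroup_dvd_card _
  have hwm : w ∣ m := card_subgroup_dvd_card _
  have hcn : c ∣ n := card_subgroup_dvd_card _
  have hc'm : c' ∣ m := card_subgroup_dvd_card _
  have hzc : z ∣ c := card_dvd_of_le (center_le_centralizer _)
  have hwc' : w ∣ c' := card_dvd_of_le (center_le_centralizer _)
  have hc1 : 0 < c := Nat.card_pos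
  have hc'1 : 0 < c' := Nat.card_pos
  have hzlec : z ≤ c := Nat.le_of_dvd hc1 hzc
  have hwlec' : w ≤ c' := Nat.le_of_dvd hc'1 hwc'
  have hzlen : z ≤ n := Nat.le_of_dvd hn1 hzn
  have hwlem : w ≤ m := Nat.le_of_dvd hm1 hwm
  have hcltn : c < n := by
    rcases lt_or_eq_of_le (Nat.le_of_dvd hn1 hcn) with h | h
    · exact h
    · exact absurd (Subgroup.mem_center_iff.mpr (fun h' => by
        have : h' ∈ centralizer {g} := (eq_top_of_card_eq _ h).symm ▸ Subgroup.mem_top h'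
        exact (mem_centralizer_singleton_iff.mp this).symm ▸ rfl)) hg
  -- suppose m < n and derive a contradiction
  have hle : n ≤ m := by
    by_contra hcon
    push_neg at hcon
    set d := n - m with hd
    have hd1 : 0 < d := by omega
    have hdz : d + 1 ≤ z := by omega
    have hcc' : c = c' + d := by omega
    obtain ⟨k, hk⟩ := hcn
    have hk1 : 0 < k := by
      rcases Nat.eq_zero_or_pos k with rfl | h
      · rw [Nat.mul_zero] at hk; omega
      · exact h
    obtain ⟨k'', rfl⟩ : ∃ k'', k = k'' + 1 := ⟨k - 1, by omega⟩
    have hk2 : 1 ≤ k'' := by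
      rcases Nat.lt_or_ge k'' 1 with h | h
      · interval_cases k'' <;> omega
      · exact h
    have hkz : (k'' + 1) * z ≤ c := by
      have h3 : c * ((k'' + 1) * z) ≤ c * c := by
        calc c * ((k'' + 1) * z) = (c * (k'' + 1)) * z := by ring
        _ = n * z := by rw [hk]
        _ ≤ c ^ 2 := hC
        _ = c * c := sq c
      exact Nat.le_of_mul_le_mul_left h3 hc1
    have e1 : c * (k'' + 1) = c' * (k'' + 1) + (d * k'' + d) := by rw [hcc']; ring
    have hmval : m = c' * (k'' + 1) + d * k'' := by omega
    have hdvd : c' ∣ d * k'' :=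
      (Nat.dvd_add_right (dvd_mul_right c' (k'' + 1))).mp (hmval ▸ hc'm)
    have hle' : c' ≤ d * k'' := Nat.le_of_dvd (Nat.mul_pos hd1 hk2) hdvd
    have e2 : (k'' + 1) * d = d * k'' + d := by ring
    have h4 : (k'' + 1) * z ≤ (k'' + 1) * d := by omega
    have : z ≤ d := Nat.le_of_mul_le_mul_left h4 (by omega)
    omega
  omega
end

section
/- Let P be a finite non-abelian p-group and H = P₁ × A a finite group where P₁ is a p-group and A is a finite abelian group with gcd(p, |A|) = 1. If the non-commuting graphs Γ_P and Γ_H are isomorphic, then |P| = |H| (in fact |A| = 1 and |Z(P)| = |Z(H)|). -/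
open Subgroup

private lemma pow_mul_eq {p a b u w : ℕ} (hp : p.Prime) (hu : ¬ p ∣ u) (hw : ¬ p ∣ w)
    (h : p ^ a * u = p ^ b * w) : a = b ∧ u = w := by
  rcases le_total a b with hab | hab
  · obtain ⟨d, rfl⟩ := Nat.exists_eq_add_of_le hab
    rw [pow_add, mul_assoc] at h
    have h2 : u = p ^ d * w := Nat.eq_of_mul_eq_mul_left (pow_pos hp.pos a) h
    rcases Nat.eq_zero_or_pos d with rfl | hd
    · exact ⟨by omega, by simpa using h2⟩
    · exact absurd (h2 ▸ dvd_mul_of_dvd_left (dvd_pow_self p (by omega)) w) hu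
  · obtain ⟨d, rfl⟩ := Nat.exists_eq_add_of_le hab
    rw [pow_add, mul_assoc] at h
    have h2 : p ^ d * u = w := Nat.eq_of_mul_eq_mul_left (pow_pos hp.pos b) h
    rcases Nat.eq_zero_or_pos d with rfl | hd
    · exact ⟨by omega, by simpa using h2⟩
    · exact absurd (h2 ▸ dvd_mul_of_dvd_left (dvd_pow_self p (by omega)) u) hw

private lemma extract {p b e M W : ℕ} (hp : 2 ≤ p) (hbe : b < e)
    (h : p ^ e * M = p ^ b * M + W) :
    ∃ s, s + 1 = p ^ (e - b) ∧ ¬ p ∣ s ∧ W = p ^ b * (s * M) := by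
  have hpow : 1 ≤ p ^ (e - b) := Nat.one_le_pow _ _ (by omega)
  refine ⟨p ^ (e - b) - 1, by omega, ?_, ?_⟩
  · intro hdvd
    have h1 : p ∣ p ^ (e - b) := dvd_pow_self p (by omega)
    have : p ∣ p ^ (e - b) - (p ^ (e - b) - 1) := Nat.dvd_sub h1 hdvd
    have : p ∣ 1 := by
      have heq : p ^ (e - b) - (p ^ (e - b) - 1) = 1 := by omega
      rwa [heq] at this
    have := Nat.le_of_dvd one_pos this
    omega
  · set s := p ^ (e - b) - 1 with hs
    have hs1 : s + 1 = p ^ (e - b) := by omega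
    have he : p ^ e = p ^ b * p ^ (e - b) := by rw [← pow_add]; congr 1; omega
    have key : p ^ b * (s * M) + p ^ b * M = p ^ b * M + W := by
      calc p ^ b * (s * M) + p ^ b * M = p ^ b * ((s + 1) * M) := by ring
        _ = p ^ b * (p ^ (e - b) * M) := by rw [hs1]
        _ = p ^ e * M := by rw [he]; ring
        _ = p ^ b * M + W := h
    linarith

private lemma arith {p m n z n₁ z₁ c c₁ V W : ℕ} (hp : p.Prime) (hm : ¬ p ∣ m) (hm1 : 1 ≤ m)
    (h1 : p ^ n = p ^ z + V) (h2 : p ^ n₁ * m = p ^ z₁ * m + V)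
    (h3 : p ^ c = p ^ z + W) (h4 : p ^ c₁ * m = p ^ z₁ * m + W)
    (hW : 1 ≤ W) (hz₁c₁ : z₁ < c₁) (hc₁n₁ : c₁ < n₁) :
    m = 1 ∧ z = z₁ ∧ n = n₁ := by
  have hp2 : 2 ≤ p := hp.two_le
  have hzc : z < c := by
    have hlt : p ^ z < p ^ c := by omega
    exact (Nat.pow_lt_pow_iff_right (by omega)).mp hlt
  have hz₁n₁ : z₁ < n₁ := by omega
  have hV : 1 ≤ V := by
    have hlt : p ^ z₁ < p ^ n₁ := Nat.pow_lt_pow_right (by omega) hz₁n₁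
    have : p ^ z₁ * m < p ^ n₁ * m := by
      exact Nat.mul_lt_mul_of_lt_of_le hlt (le_refl m) (by omega)
    omega
  have hzn : z < n := by
    have hlt : p ^ z < p ^ n := by omega
    exact (Nat.pow_lt_pow_iff_right (by omega)).mp hlt
  obtain ⟨u, hu1, hup, hWu⟩ := extract (M := 1) hp2 hzc (by simpa using h3)
  obtain ⟨u₁, hu₁1, hu₁p, hWu₁⟩ := extract hp2 hz₁c₁ h4
  obtain ⟨U, hU1, hUp, hVU⟩ := extract (M := 1) hp2 hzn (by simpa using h1)
  obtain ⟨U₁, hU₁1, hU₁p, hVU₁⟩ := extract hp2 hz₁n₁ h2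
  rw [mul_one] at hWu hVU
  have hnd1 : ¬ p ∣ u₁ * m := by
    intro hd
    rcases (Nat.Prime.dvd_mul hp).mp hd with h | h
    exacts [hu₁p h, hm h]
  have hnd2 : ¬ p ∣ U₁ * m := by
    intro hd
    rcases (Nat.Prime.dvd_mul hp).mp hd with h | h
    exacts [hU₁p h, hm h]
  obtain ⟨hzz, huu⟩ := pow_mul_eq hp hup hnd1 (by rw [← hWu, hWu₁])
  obtain ⟨-, hUU⟩ := pow_mul_eq hp hUp hnd2 (by rw [← hVU, hVU₁])
  have hu₁pos : 1 ≤ u₁ := by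
    have : 2 ≤ p ^ (c₁ - z₁) := by
      calc 2 ≤ p := hp2
        _ = p ^ 1 := (pow_one p).symm
        _ ≤ p ^ (c₁ - z₁) := Nat.pow_le_pow_right (by omega) (by omega)
    omega
  have hltu : u₁ < U₁ := by
    have : p ^ (c₁ - z₁) < p ^ (n₁ - z₁) := Nat.pow_lt_pow_right (by omega) (by omega)
    omega
  have huU : u < U := by
    rw [huu, hUU]
    exact Nat.mul_lt_mul_of_lt_of_le hltu (le_refl m) (by omega)
  have hγν : c - z < n - z := by
    have : p ^ (c - z) < p ^ (n - z) := by omega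
    exact (Nat.pow_lt_pow_iff_right (by omega)).mp this
  -- difference decomposition on P side
  have hpν : p ^ (n - z) = p ^ (c - z) * p ^ ((n - z) - (c - z)) := by
    rw [← pow_add]; congr 1; omega
  set s := p ^ ((n - z) - (c - z)) - 1 with hsdef
  have hspow : 1 ≤ p ^ ((n - z) - (c - z)) := Nat.one_le_pow _ _ (by omega)
  have hs1 : s + 1 = p ^ ((n - z) - (c - z)) := by omega
  have hsp : ¬ p ∣ s := by
    intro hdvd
    have h1' : p ∣ p ^ ((n - z) - (c - z)) := dvd_pow_self p (by omega)
    have : p ∣ 1 := by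
      have heq : p ^ ((n - z) - (c - z)) - s = 1 := by omega
      have := Nat.dvd_sub h1' hdvd
      rwa [heq] at this
    have := Nat.le_of_dvd one_pos this
    omega
  have hUs : U = u + p ^ (c - z) * s := by
    have : p ^ (c - z) * (s + 1) = p ^ (c - z) * s + p ^ (c - z) := by ring
    rw [hs1, ← hpν] at this
    -- this : p ^ (n-z) = p^(c-z)*s + p^(c-z)
    have h5 : U + 1 = p ^ (c - z) * s + (u + 1) := by rw [hU1, this, ← hu1]
    omega
  -- difference decomposition on H side
  have hpν₁ : p ^ (n₁ - z₁) = p ^ (c₁ - z₁) * p ^ ((n₁ - z₁) - (c₁ - z₁)) := by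
    rw [← pow_add]; congr 1; omega
  set s₁ := p ^ ((n₁ - z₁) - (c₁ - z₁)) - 1 with hs₁def
  have hs₁pow : 1 ≤ p ^ ((n₁ - z₁) - (c₁ - z₁)) := Nat.one_le_pow _ _ (by omega)
  have hs₁1 : s₁ + 1 = p ^ ((n₁ - z₁) - (c₁ - z₁)) := by omega
  have hs₁p : ¬ p ∣ s₁ := by
    intro hdvd
    have h1' : p ∣ p ^ ((n₁ - z₁) - (c₁ - z₁)) := dvd_pow_self p (by omega)
    have : p ∣ 1 := by
      have heq : p ^ ((n₁ - z₁) - (c₁ - z₁)) - s₁ = 1 := by omega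
      have := Nat.dvd_sub h1' hdvd
      rwa [heq] at this
    have := Nat.le_of_dvd one_pos this
    omega
  have hU₁s : U₁ = u₁ + p ^ (c₁ - z₁) * s₁ := by
    have : p ^ (c₁ - z₁) * (s₁ + 1) = p ^ (c₁ - z₁) * s₁ + p ^ (c₁ - z₁) := by ring
    rw [hs₁1, ← hpν₁] at this
    have h5 : U₁ + 1 = p ^ (c₁ - z₁) * s₁ + (u₁ + 1) := by rw [hU₁1, this, ← hu₁1]
    omega
  have hnd3 : ¬ p ∣ s₁ * m := by
    intro hd
    rcases (Nat.Prime.dvd_mul hp).mp hd with h | h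
    exacts [hs₁p h, hm h]
  have hkey : p ^ (c - z) * s = p ^ (c₁ - z₁) * (s₁ * m) := by
    have e1 : u + p ^ (c - z) * s = u + p ^ (c₁ - z₁) * (s₁ * m) := by
      rw [← hUs, hUU, hU₁s, huu]; ring
    exact Nat.add_left_cancel e1
  obtain ⟨hγγ, -⟩ := pow_mul_eq hp hsp hnd3 hkey
  have huequ : u = u₁ := by
    have : u + 1 = u₁ + 1 := by rw [hu1, hu₁1, hγγ]
    omega
  have hm1' : m = 1 := by
    have : u₁ * 1 = u₁ * m := by rw [mul_one, ← huu]; exact huequ.symm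
    exact (Nat.eq_of_mul_eq_mul_left (by omega) this).symm
  have hnn : n = n₁ := by
    have hUeq : U = U₁ := by rw [hUU, hm1', mul_one]
    have : p ^ (n - z) = p ^ (n₁ - z₁) := by rw [← hU1, ← hU₁1, hUeq]
    have := Nat.pow_right_injective hp2 this
    omega
  exact ⟨hm1', hzz, hnn⟩

private lemma card_compl_add {X : Type*} [Finite X] (r : X → Prop) :
    Nat.card {x // r x} + Nat.card {x // ¬ r x} = Nat.card X := by
  classical
  rw [← Nat.card_sum]
  exact Nat.card_congr (Equiv.sumCompl r)

private lemma card_split {X : Type*} [Finite X] (q r : X → Prop) :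
    Nat.card {x // q x} = Nat.card {x // q x ∧ r x} + Nat.card {x // q x ∧ ¬ r x} := by
  classical
  rw [← Nat.card_sum]
  apply Nat.card_congr
  exact ((Equiv.sumCongr (Equiv.subtypeSubtypeEquivSubtypeInter q r)
      (Equiv.subtypeSubtypeEquivSubtypeInter q fun x => ¬ r x)).symm.trans
      (Equiv.sumCompl fun v : {x // q x} => r v.1)).symm

private lemma card_eq_card_add_card_notMem {G : Type*} [Group G] [Finite G] (H : Subgroup G) :
    Nat.card G = Nat.card H + Nat.card {x : G // x ∉ H} := by
  exact (card_compl_add fun x : G => x ∈ H).symm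

private lemma card_centralizer_split {G : Type*} [Group G] [Finite G] (x0 : G) :
    Nat.card (Subgroup.centralizer ({x0} : Set G)) =
      Nat.card (center G) + Nat.card {v : {x : G // x ∉ center G} // Commute v.1 x0} := by
  classical
  have e1 : Nat.card (Subgroup.centralizer ({x0} : Set G)) =
      Nat.card {x : G // Commute x x0} :=
    Nat.card_congr (Equiv.subtypeEquivRight fun x => by
      rw [Subgroup.mem_centralizer_singleton_iff]; exact Iff.rfl)
  rw [e1, card_split (fun x : G => Commute x x0) (fun x => x ∈ center G)]
  congr 1
  · exact Nat.card_congr (Equiv.subtypeEquivRight fun x =>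
      ⟨And.right, fun h => ⟨((Subgroup.mem_center_iff.mp h) x0).symm, h⟩⟩)
  · exact Nat.card_congr
      (((Equiv.subtypeSubtypeEquivSubtypeInter (fun x : G => x ∉ center G)
        (fun x => Commute x x0)).trans (Equiv.subtypeEquivRight fun x => and_comm)).symm)

private lemma mem_center_prod {G A : Type*} [Group G] [CommGroup A] (w : G × A) :
    w ∈ center (G × A) ↔ w.1 ∈ center G := by
  rw [Subgroup.mem_center_iff, Subgroup.mem_center_iff]
  constructor
  · intro h g
    exact congrArg Prod.fst (h (g, 1))
  · intro h g
    have h1 : g.1 * w.1 = w.1 * g.1 := h g.1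
    have h2 : g.2 * w.2 = w.2 * g.2 := mul_comm _ _
    exact Prod.ext h1 h2

private lemma commute_prod {G A : Type*} [Group G] [CommGroup A] (w v : G × A) :
    Commute w v ↔ Commute w.1 v.1 := by
  constructor
  · intro h; exact congrArg Prod.fst h
  · intro h; exact Prod.ext h (mul_comm _ _)

private lemma prod_center_card {G A : Type*} [Group G] [CommGroup A] [Finite G] [Finite A] :
    Nat.card (center (G × A)) = Nat.card (center G) * Nat.card A := by
  rw [← Nat.card_prod]
  exact Nat.card_congr ((Equiv.subtypeEquivRight fun w => mem_center_prod w).trans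
    Equiv.prodSubtypeFstEquivSubtypeProd)

private lemma prod_centralizer_card {G A : Type*} [Group G] [CommGroup A] [Finite G] [Finite A]
    (y0 : G × A) :
    Nat.card (Subgroup.centralizer ({y0} : Set (G × A))) =
      Nat.card (Subgroup.centralizer ({y0.1} : Set G)) * Nat.card A := by
  rw [← Nat.card_prod]
  refine Nat.card_congr ((Equiv.subtypeEquivRight fun w => ?_).trans
    (Equiv.prodSubtypeFstEquivSubtypeProd
      (p := fun h => h ∈ Subgroup.centralizer ({y0.1} : Set G))))
  rw [Subgroup.mem_centralizer_singleton_iff, Subgroup.mem_centralizer_singleton_iff]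
  constructor
  · intro h; exact congrArg Prod.fst h
  · intro h; exact Prod.ext h (mul_comm _ _)

theorem stmt4 (p : ℕ) (hp : p.Prime) (P P₁ A : Type*) [Group P] [Group P₁] [CommGroup A]
    [Finite P] [Finite P₁] [Finite A]
    (hP : IsPGroup p P) (hPna : ¬ ∀ a b : P, a * b = b * a)
    (hP₁ : IsPGroup p P₁) (hA : Nat.Coprime p (Nat.card A))
    (φ : NCGraphIso P (P₁ × A)) :
    Nat.card P = Nat.card (P₁ × A) ∧ Nat.card A = 1 ∧
      Nat.card (center P) = Nat.card (center (P₁ × A)) := by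
  classical
  haveI : Fact p.Prime := ⟨hp⟩
  push_neg at hPna
  obtain ⟨a0, b0, hab⟩ := hPna
  have hx : a0 ∉ center P := fun h => hab ((Subgroup.mem_center_iff.mp h b0).symm)
  obtain ⟨e, he⟩ := φ
  set x : {x : P // x ∉ center P} := ⟨a0, hx⟩ with hxdef
  set y0 : P₁ × A := (e x).1 with hy0
  have hyc : y0 ∉ center (P₁ × A) := (e x).2
  have hgc : y0.1 ∉ center P₁ := fun h => hyc ((mem_center_prod y0).mpr h)
  -- exponents
  obtain ⟨z, hz⟩ := (hP.to_subgroup (center P)).exists_card_eq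
  obtain ⟨n, hn⟩ := hP.exists_card_eq
  obtain ⟨z₁, hz₁⟩ := (hP₁.to_subgroup (center P₁)).exists_card_eq
  obtain ⟨n₁, hn₁⟩ := hP₁.exists_card_eq
  obtain ⟨c, hc⟩ := (hP.to_subgroup (Subgroup.centralizer ({a0} : Set P))).exists_card_eq
  obtain ⟨c₁, hc₁⟩ := (hP₁.to_subgroup (Subgroup.centralizer ({y0.1} : Set P₁))).exists_card_eq
  set m := Nat.card A with hmdef
  have hm0 : 0 < m := Nat.card_pos
  have hpm : ¬ p ∣ m := (Nat.Prime.coprime_iff_not_dvd hp).mp hA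
  set V := Nat.card {x : P // x ∉ center P} with hVdef
  set W := Nat.card {v : {x : P // x ∉ center P} // Commute v.1 a0} with hWdef
  -- vertex counts agree
  have hVH : Nat.card {y : P₁ × A // y ∉ center (P₁ × A)} = V := (Nat.card_congr e).symm
  -- equation 1 : |P| = |Z(P)| + V
  have h1 : p ^ n = p ^ z + V := by
    have := card_eq_card_add_card_notMem (center P)
    rw [hn, hz] at this
    exact this
  -- equation 2 : |H| = |Z(H)| + V
  have h2 : p ^ n₁ * m = p ^ z₁ * m + V := by
    have h2a := card_eq_card_add_card_notMem (center (P₁ × A))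
    rw [Nat.card_prod, hn₁, prod_center_card, hz₁, hVH] at h2a
    exact h2a
  -- equation 3 : |C_P(a0)| = |Z(P)| + W
  have h3 : p ^ c = p ^ z + W := by
    have := card_centralizer_split a0
    rw [hc, hz] at this
    exact this
  -- W on the H side
  have hWH : Nat.card {v : {y : P₁ × A // y ∉ center (P₁ × A)} // Commute v.1 y0} = W := by
    refine (Nat.card_congr (Equiv.subtypeEquiv (p := fun v => Commute v.1 a0)
      (q := fun w => Commute w.1 y0) e fun v => ?_)).symm
    exact he v x
  -- equation 4 : |C_H(y0)| = |Z(H)| + W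
  have h4 : p ^ c₁ * m = p ^ z₁ * m + W := by
    have h4a := card_centralizer_split y0
    rw [prod_centralizer_card, hc₁, prod_center_card, hz₁, hWH] at h4a
    exact h4a
  -- W ≥ 1
  have hW1 : 1 ≤ W := by
    haveI : Nonempty {v : {x : P // x ∉ center P} // Commute v.1 a0} :=
      ⟨⟨x, Commute.refl a0⟩⟩
    exact Nat.card_pos
  -- z₁ < c₁
  have hz₁c₁ : z₁ < c₁ := by
    have hle : p ^ z₁ * m < p ^ c₁ * m := by omega
    have : p ^ z₁ < p ^ c₁ := by
      by_contra hcon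
      push_neg at hcon
      exact absurd (Nat.mul_le_mul_right m hcon) (by omega)
    exact (Nat.pow_lt_pow_iff_right hp.one_lt).mp this
  -- c₁ < n₁
  have hc₁n₁ : c₁ < n₁ := by
    obtain ⟨h0, hh0⟩ : ∃ h0 : P₁, ¬ (h0 * y0.1 = y0.1 * h0) := by
      by_contra hcon
      push_neg at hcon
      exact hgc (Subgroup.mem_center_iff.mpr hcon)
    have hnotmem : h0 ∉ Subgroup.centralizer ({y0.1} : Set P₁) := by
      rw [Subgroup.mem_centralizer_singleton_iff]; exact hh0
    have hsplit := card_eq_card_add_card_notMem (Subgroup.centralizer ({y0.1} : Set P₁))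
    haveI : Nonempty {x : P₁ // x ∉ Subgroup.centralizer ({y0.1} : Set P₁)} := ⟨⟨h0, hnotmem⟩⟩
    have hpos : 0 < Nat.card {x : P₁ // x ∉ Subgroup.centralizer ({y0.1} : Set P₁)} :=
      Nat.card_pos
    rw [hn₁, hc₁] at hsplit
    have : p ^ c₁ < p ^ n₁ := by omega
    exact (Nat.pow_lt_pow_iff_right hp.one_lt).mp this
  obtain ⟨hm1, hzz₁, hnn₁⟩ := arith hp hpm (by omega) h1 h2 h3 h4 hW1 hz₁c₁ hc₁n₁
  refine ⟨?_, hm1, ?_⟩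
  · rw [hn, Nat.card_prod, hn₁, ← hmdef, hm1, mul_one, hnn₁]
  · rw [hz, prod_center_card, hz₁, ← hmdef, hm1, mul_one, hzz₁]
end

section
/- Let P be a finite non-abelian p-group and H = Q × A where Q is a finite q-group for a prime q, A is a finite abelian group with gcd(|A|, q) = 1. If Γ_P ≅ Γ_H, then |P| = |H|. -/
/-!
Write `|P| = p^n`, `|Z(P)| = p^m`, `|Q| = q^s`, `|Z(Q)| = q^t` and `a = |A|`, so that
`Z(Q × A) = Z(Q) × A`. A graph isomorphism preserves the number of vertices, and the number of
vertices commuting with a vertex `x` is `|C(x)| - |Z|`. By the class equation there is a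
non-central `x₀ ∈ Q` with `[Q : C_Q(x₀)] ≤ |Z(Q)|`; writing `|C_Q(x₀)| = q^c'` (so `s ≤ c' + t`)
and `|C_P(x)| = p^c` for the vertex `x` matched with `(x₀, 1)`, we get
`p^n - p^m = (q^s - q^t) a` and `p^c - p^m = (q^c' - q^t) a`.
If `p ≠ q`, the second equation gives `q^t ∣ p^(c-m) - 1`, and eliminating `a` gives
`p^(c-m) ∣ q^(s-c') - 1`, so `q^t < p^(c-m) < q^(s-c') ≤ q^t`. If `p = q`, comparing `p`-adic
valuations gives `m = t`, then `c = c'`, hence `a = 1` and `n = s`.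
-/

open Subgroup

theorem ConjClasses.card_carrier_mk {G : Type*} [Group G] (g : G) :
    Nat.card (ConjClasses.mk g).carrier = (centralizer {g}).index := by
  rw [← ConjAct.orbit_eq_carrier_conjClasses, Nat.card_coe_set_eq, ← MulAction.index_stabilizer,
    centralizer_eq_comap_stabilizer]
  exact (index_comap_of_surjective _ ConjAct.toConjAct.surjective).symm

namespace Subgroup

variable {G H : Type*} [Group G] [Group H]

theorem card_prod (K : Subgroup G) (L : Subgroup H) :
    Nat.card (K.prod L) = Nat.card K * Nat.card L := by
  rw [Nat.card_congr (K.prodEquiv L).toEquiv, Nat.card_prod]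

theorem centralizer_singleton_prod_mk (x : G) (y : H) :
    centralizer {(x, y)} = (centralizer {x}).prod (centralizer {y}) := by
  ext ⟨a, b⟩
  simp [mem_centralizer_singleton_iff, mem_prod, Prod.ext_iff]

theorem center_prod_of_commGroup (A : Type*) [CommGroup A] :
    center (G × A) = (center G).prod ⊤ := by
  rw [Subgroup.center_prod, CommGroup.center_eq_top]

theorem card_center_prod_of_commGroup (A : Type*) [CommGroup A] :
    Nat.card (center (G × A)) = Nat.card (center G) * Nat.card A := by
  rw [center_prod_of_commGroup, card_prod, card_top]

theorem card_centralizer_prod_mk_of_commGroup {A : Type*} [CommGroup A] (x : G) (a : A) :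
    Nat.card (centralizer {(x, a)}) = Nat.card (centralizer {x}) * Nat.card A := by
  rw [centralizer_singleton_prod_mk, card_prod,
    (centralizer_eq_top_iff_subset (s := {a})).mpr (by simp [CommGroup.center_eq_top]), card_top]

variable [Finite G]

theorem card_center_lt_card_centralizer {x : G} (hx : x ∉ center G) :
    Nat.card (center G) < Nat.card (centralizer {x}) := by
  have h := Set.ncard_lt_ncard (SetLike.coe_ssubset_coe.mpr (SetLike.lt_iff_le_and_exists.mpr
    ⟨center_le_centralizer {x}, x, mem_centralizer_singleton_iff.mpr rfl, hx⟩))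
  rwa [← Nat.card_coe_set_eq, ← Nat.card_coe_set_eq] at h

theorem card_centralizer_lt_card {x : G} (hx : x ∉ center G) :
    Nat.card (centralizer {x}) < Nat.card G := by
  obtain ⟨g, hg⟩ : ∃ g, g ∉ centralizer {x} := by
    by_contra! h
    exact hx (centralizer_eq_top_iff_subset.mp (eq_top_iff.mpr fun g _ => h g) rfl)
  exact Finite.card_subtype_lt hg

theorem card_noncenter_mem_add_card_center {K : Subgroup G} (hK : center G ≤ K) :
    Nat.card {g : {x : G // x ∉ center G} // g.1 ∈ K} + Nat.card (center G) = Nat.card K := by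
  have h := Set.ncard_sdiff_add_ncard_of_subset (SetLike.coe_subset_coe.mpr hK)
  rw [← Nat.card_coe_set_eq, ← Nat.card_coe_set_eq, ← Nat.card_coe_set_eq] at h
  refine (congrArg (· + Nat.card (center G)) ?_).trans h
  exact Nat.card_congr ((Equiv.subtypeSubtypeEquivSubtypeInter _ (· ∈ K)).trans
    (Equiv.subtypeEquivRight fun _ => and_comm))

end Subgroup

namespace IsPGroup

variable {p : ℕ} [Fact p.Prime] {G : Type*} [Group G] [Finite G]

theorem exists_card_eq_pow_of_notMem_center (hG : IsPGroup p G) {x : G} (hx : x ∉ center G) :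
    ∃ m c n : ℕ, m < c ∧ c < n ∧ Nat.card (center G) = p ^ m ∧
      Nat.card (centralizer {x}) = p ^ c ∧ Nat.card G = p ^ n := by
  obtain ⟨m, hm⟩ := iff_card.mp (hG.to_subgroup (center G))
  obtain ⟨c, hc⟩ := iff_card.mp (hG.to_subgroup (centralizer {x}))
  obtain ⟨n, hn⟩ := iff_card.mp hG
  have hp := (Fact.out : p.Prime).one_lt
  refine ⟨m, c, n, ?_, ?_, hm, hc, hn⟩
  · exact (Nat.pow_lt_pow_iff_right hp).mp (hm ▸ hc ▸ card_center_lt_card_centralizer hx)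
  · exact (Nat.pow_lt_pow_iff_right hp).mp (hc ▸ hn ▸ card_centralizer_lt_card hx)

theorem exists_notMem_center_index_centralizer_le (hG : IsPGroup p G) (hG' : center G ≠ ⊤) :
    ∃ x ∉ center G, (centralizer {x}).index ≤ Nat.card (center G) := by
  by_contra! hlarge
  obtain ⟨t, ht⟩ := iff_card.mp (hG.to_subgroup (center G))
  obtain ⟨n, hn⟩ := iff_card.mp hG
  have hp := (Fact.out : p.Prime).one_lt
  have hdvd_of_lt : ∀ k, p ^ t < p ^ k → p ^ (t + 1) ∣ p ^ k := fun k h =>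
    pow_dvd_pow p ((Nat.pow_lt_pow_iff_right hp).mp h)
  have hclasses : p ^ (t + 1) ∣ ∑ᶠ cl ∈ ConjClasses.noncenter G, Nat.card cl.carrier := by
    rw [finsum_mem_eq_finite_toFinset_sum _ (Set.toFinite _)]
    refine Finset.dvd_sum fun cl hcl => ?_
    obtain ⟨g, rfl⟩ := ConjClasses.exists_rep cl
    have hg : g ∉ center G := fun h =>
      (ConjClasses.mk_bijOn G).mapsTo h ((Set.Finite.mem_toFinset _).mp hcl)
    obtain ⟨k, hk⟩ := hG.index (centralizer {g})
    rw [ConjClasses.card_carrier_mk, hk]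
    exact hdvd_of_lt k (ht ▸ hk ▸ hlarge g hg)
  have hcard : p ^ (t + 1) ∣ Nat.card G := hn ▸ hdvd_of_lt n (ht ▸ hn ▸
    lt_of_le_of_ne (card_le_card_group _) ((card_eq_iff_eq_top _).not.mpr hG'))
  rw [← Group.nat_card_center_add_sum_card_noncenter_eq_card, Nat.dvd_add_left hclasses, ht,
    Nat.pow_dvd_pow_iff_le_right hp] at hcard
  omega

end IsPGroup

namespace NCGraphIso

variable {G H : Type*} [Group G] [Group H] [Finite G] [Finite H]

theorem card_sub_card_center_eq_of_mem_iff (e : {x : G // x ∉ center G} ≃ {y : H // y ∉ center H})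
    {K : Subgroup G} {L : Subgroup H} (hK : center G ≤ K) (hL : center H ≤ L)
    (he : ∀ g, g.1 ∈ K ↔ (e g).1 ∈ L) :
    (Nat.card K : ℤ) - Nat.card (center G) = Nat.card L - Nat.card (center H) := by
  rw [← card_noncenter_mem_add_card_center hK, ← card_noncenter_mem_add_card_center hL,
    Nat.card_congr (e.subtypeEquiv (q := fun h => h.1 ∈ L) he)]
  push_cast
  ring

theorem card_sub_card_center (φ : NCGraphIso G H) :
    (Nat.card G : ℤ) - Nat.card (center G) = Nat.card H - Nat.card (center H) := by
  simpa only [card_top] using card_sub_card_center_eq_of_mem_iff φ.1 le_top le_top (by simp)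

theorem card_centralizer_sub_card_center (φ : NCGraphIso G H) (x : {x : G // x ∉ center G}) :
    (Nat.card (centralizer {x.1}) : ℤ) - Nat.card (center G) =
      Nat.card (centralizer {(φ.1 x).1}) - Nat.card (center H) :=
  card_sub_card_center_eq_of_mem_iff φ.1 (center_le_centralizer _) (center_le_centralizer _)
    fun g => by
      simp only [mem_centralizer_singleton_iff]
      exact Commute.symm_iff.trans ((φ.2 x g).trans Commute.symm_iff)

end NCGraphIso

theorem Int.eq_of_prime_pow_mul_eq {p x y : ℕ} {u v : ℤ} (hp : p.Prime) (hu : ¬ (p : ℤ) ∣ u)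
    (hv : ¬ (p : ℤ) ∣ v) (h : (p : ℤ) ^ x * u = p ^ y * v) : x = y := by
  have dvd_of_lt : ∀ {x y : ℕ} {u v : ℤ}, (p : ℤ) ^ x * u = p ^ y * v → y < x → (p : ℤ) ∣ v := by
    intro x y u v h hyx
    have hp0 : (p : ℤ) ^ y ≠ 0 := pow_ne_zero _ (by exact_mod_cast hp.ne_zero)
    have hv : v = p ^ (x - y) * u :=
      mul_left_cancel₀ hp0 (by rw [← h, ← mul_assoc, ← pow_add, Nat.add_sub_cancel' hyx.le])
    exact hv ▸ (dvd_pow_self _ (by omega)).mul_right u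
  rcases lt_trichotomy x y with hxy | rfl | hxy
  · exact absurd (dvd_of_lt h.symm hxy) hu
  · rfl
  · exact absurd (dvd_of_lt h hxy) hv

theorem Int.not_natCast_dvd_pow_succ_sub_one {p : ℕ} (hp : p.Prime) (k : ℕ) :
    ¬ (p : ℤ) ∣ p ^ (k + 1) - 1 := fun h => by
  have h1 : (p : ℤ) ∣ 1 := by
    simpa using (dvd_pow_self (p : ℤ) k.succ_ne_zero).sub h
  exact hp.one_lt.ne' (by exact_mod_cast Int.eq_one_of_dvd_one (by positivity) h1)

theorem pow_eq_pow_mul_of_pow_sub_pow_eq {p a m c n t c' s : ℕ} (hp : p.Prime) (ha : ¬ p ∣ a)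
    (hmc : m < c) (hcn : c < n) (htc : t < c') (hcs : c' < s)
    (h₁ : (p : ℤ) ^ n - p ^ m = (p ^ s - p ^ t) * a)
    (h₂ : (p : ℤ) ^ c - p ^ m = (p ^ c' - p ^ t) * a) :
    p ^ n = p ^ s * a := by
  obtain ⟨C, rfl⟩ := Nat.exists_eq_add_of_lt hmc
  obtain ⟨D, rfl⟩ := Nat.exists_eq_add_of_lt hcn
  obtain ⟨C', rfl⟩ := Nat.exists_eq_add_of_lt htc
  obtain ⟨D', rfl⟩ := Nat.exists_eq_add_of_lt hcs
  have hpZ : Prime (p : ℤ) := Nat.prime_iff_prime_int.mp hp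
  have hpa : ¬ (p : ℤ) ∣ a := by exact_mod_cast ha
  have hpu := Int.not_natCast_dvd_pow_succ_sub_one hp
  have hmt : m = t := Int.eq_of_prime_pow_mul_eq hp (hpu C)
    (fun h => (hpZ.dvd_or_dvd h).elim (hpu C') hpa)
    (show (p : ℤ) ^ m * (p ^ (C + 1) - 1) = p ^ t * ((p ^ (C' + 1) - 1) * a) by
      linear_combination h₂)
  subst hmt
  have hCC : m + C + 1 = m + C' + 1 := Int.eq_of_prime_pow_mul_eq hp (hpu D)
    (fun h => (hpZ.dvd_or_dvd h).elim (hpu D') hpa)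
    (show (p : ℤ) ^ (m + C + 1) * (p ^ (D + 1) - 1) = p ^ (m + C' + 1) * ((p ^ (D' + 1) - 1) * a) by
      linear_combination h₁ - h₂)
  obtain rfl : C = C' := by omega
  have hgap : (p : ℤ) ^ (m + C + 1) - p ^ m ≠ 0 :=
    sub_ne_zero.mpr (pow_lt_pow_right₀ (by exact_mod_cast hp.one_lt) (by omega)).ne'
  have ha1 : (a : ℤ) = 1 :=
    mul_left_cancel₀ hgap (by linear_combination -h₂)
  have : (p : ℤ) ^ (m + C + 1 + D + 1) = p ^ (m + C + 1 + D' + 1) * a := by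
    linear_combination h₁ - p ^ m * ha1
  exact_mod_cast this

theorem Nat.Prime.eq_of_pow_sub_pow_eq {p q m c n t c' s : ℕ} {a : ℤ} (hp : p.Prime)
    (hq : q.Prime) (hmc : m < c) (hcn : c ≤ n) (htc : t ≤ c') (hcs : c' < s) (hsct : s ≤ c' + t)
    (h₁ : (p : ℤ) ^ n - p ^ m = (q ^ s - q ^ t) * a)
    (h₂ : (p : ℤ) ^ c - p ^ m = (q ^ c' - q ^ t) * a) : p = q := by
  by_contra hpq
  obtain ⟨C, rfl⟩ := Nat.exists_eq_add_of_lt hmc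
  obtain ⟨D, rfl⟩ := Nat.exists_eq_add_of_le hcn
  obtain ⟨C', rfl⟩ := Nat.exists_eq_add_of_le htc
  obtain ⟨E, rfl⟩ := Nat.exists_eq_add_of_lt hcs
  have hcop : IsCoprime (p : ℤ) q :=
    Nat.isCoprime_iff_coprime.mpr ((Nat.coprime_primes hp hq).mpr hpq)
  have hp1 : (1 : ℤ) < p := by exact_mod_cast hp.one_lt
  have hq1 : (1 : ℤ) < q := by exact_mod_cast hq.one_lt
  have hqt : (q : ℤ) ^ t ∣ p ^ (C + 1) - 1 :=
    (hcop.symm.pow : IsCoprime ((q : ℤ) ^ t) (p ^ m)).dvd_of_dvd_mul_left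
      ⟨(q ^ C' - 1) * a, by linear_combination h₂⟩
  have hcross : ((p : ℤ) ^ (C + 1 + D) - 1) * (q ^ C' - 1) =
      (p ^ (C + 1) - 1) * (q ^ (C' + E + 1) - 1) :=
    mul_left_cancel₀ (pow_ne_zero m (by positivity : (p : ℤ) ≠ 0)) (by
      linear_combination (q ^ C' - 1) * h₁ - (q ^ (C' + E + 1) - 1) * h₂)
  have hpC : (p : ℤ) ^ (C + 1) ∣ q ^ (E + 1) - 1 :=
    (hcop.pow : IsCoprime ((p : ℤ) ^ (C + 1)) (q ^ C')).dvd_of_dvd_mul_left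
      ⟨q ^ (C' + E + 1) - 1 - p ^ D * (q ^ C' - 1), by linear_combination hcross⟩
  have h₃ : (q : ℤ) ^ t ≤ p ^ (C + 1) - 1 :=
    Int.le_of_dvd (sub_pos.mpr (one_lt_pow₀ hp1 C.succ_ne_zero)) hqt
  have h₄ : (p : ℤ) ^ (C + 1) ≤ q ^ (E + 1) - 1 :=
    Int.le_of_dvd (sub_pos.mpr (one_lt_pow₀ hq1 E.succ_ne_zero)) hpC
  have h₅ : (q : ℤ) ^ (E + 1) ≤ q ^ t := pow_le_pow_right₀ hq1.le (by omega)
  linarith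

theorem stmt5 (p q : ℕ) (hp : p.Prime) (hq : q.Prime) (P Q A : Type*)
    [Group P] [Group Q] [CommGroup A] [Finite P] [Finite Q] [Finite A]
    (hP : IsPGroup p P) (hPna : ¬ ∀ a b : P, a * b = b * a)
    (hQ : IsPGroup q Q) (hA : Nat.Coprime (Nat.card A) q)
    (φ : NCGraphIso P (Q × A)) :
    Nat.card P = Nat.card (Q × A) := by
  have := Fact.mk hp
  have := Fact.mk hq
  obtain ⟨x, y, hxy⟩ : ∃ x y : P, x * y ≠ y * x := by simpa using hPna
  have hx : x ∉ center P := fun h => hxy (mem_center_iff.mp h y).symm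
  have hQ_center : center Q ≠ ⊤ := fun h => (φ.1 ⟨x, hx⟩).2 (by
    simp only [center_prod_of_commGroup, h, top_prod_top, mem_top])
  obtain ⟨x₀, hx₀, hidx⟩ := hQ.exists_notMem_center_index_centralizer_le hQ_center
  obtain ⟨t, c', s, htc, hcs, ht, hc', hs⟩ := hQ.exists_card_eq_pow_of_notMem_center hx₀
  have hsct : s ≤ c' + t := by
    have := (card_mul_index (centralizer {x₀})).symm.trans_le (Nat.mul_le_mul_left _ hidx)
    rwa [hs, hc', ht, ← pow_add, Nat.pow_le_pow_iff_right hq.one_lt] at this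
  have hy₀ : ((x₀, 1) : Q × A) ∉ center (Q × A) := by
    simpa [center_prod_of_commGroup, mem_prod] using hx₀
  set y₀ := φ.1.symm ⟨(x₀, 1), hy₀⟩
  obtain ⟨m, c, n, hmc, hcn, hm, hc, hn⟩ := hP.exists_card_eq_pow_of_notMem_center y₀.2
  have h₁ := φ.card_sub_card_center
  have h₂ := φ.card_centralizer_sub_card_center y₀
  rw [Nat.card_prod, card_center_prod_of_commGroup] at h₁
  rw [Equiv.apply_symm_apply, card_centralizer_prod_mk_of_commGroup,
    card_center_prod_of_commGroup] at h₂
  push_cast [hm, hc, hn, ht, hc', hs] at h₁ h₂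
  obtain rfl : p = q := hp.eq_of_pow_sub_pow_eq (a := Nat.card A) hq hmc hcn.le htc.le hcs hsct
    (by linear_combination h₁) (by linear_combination h₂)
  rw [Nat.card_prod, hn, hs]
  exact pow_eq_pow_mul_of_pow_sub_pow_eq hp (hp.coprime_iff_not_dvd.mp hA.symm) hmc hcn htc hcs
    (by linear_combination h₁) (by linear_combination h₂)
end

section
/- Let P be a finite non-abelian p-group of order p^n with |Z(P)| = p^r, whose distinct non-central conjugacy class sizes are p^{a_1}, …, p^{a_k}, and let u = gcd(a_1, …, a_k, n - r). If H is a finite group with Γ_P ≅ Γ_H, then |Z(H)| divides p^r (p^u - 1). -/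
open Subgroup

/-!
An isomorphism `Γ_P ≅ Γ_H` matches the non-central elements of `P` with those of `H`, and the
non-central part of the centralizer of `x` with that of the centralizer of its image. In any
finite group the centre divides the order of every subgroup containing it, hence also the
number of non-central elements of such a subgroup. Applied to `H` and the whole group, resp. the
centralizers, this gives `|Z(H)| ∣ p^n - p^r = p^r (p^(n-r) - 1)` and
`|Z(H)| ∣ |C_P(g)| - p^r = p^r (p^(n-r-a_i) - 1)`. Since
`gcd (p^x - 1) (p^y - 1) = p^(gcd x y) - 1`, the exponents `m` with `|Z(H)| ∣ p^r (p^m - 1)` are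
closed under `gcd`, which yields the exponent `u`.
-/

theorem Nat.dvd_mul_pow_gcd_sub_one {d q r x y : ℕ} (hx : d ∣ q ^ r * (q ^ x - 1))
    (hy : d ∣ q ^ r * (q ^ y - 1)) : d ∣ q ^ r * (q ^ Nat.gcd x y - 1) := by
  rw [← Nat.pow_sub_one_gcd_pow_sub_one, ← Nat.gcd_mul_left]
  exact Nat.dvd_gcd hx hy

theorem Finset.gcd_gcd_mem_of_gcd_mem {ι : Type*} (s : Finset ι) (f : ι → ℕ) {S : Set ℕ}
    (hS : ∀ x ∈ S, ∀ y ∈ S, Nat.gcd x y ∈ S) {m : ℕ} (hm : m ∈ S)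
    (hf : ∀ i ∈ s, Nat.gcd (f i) m ∈ S) : Nat.gcd (s.gcd f) m ∈ S := by
  classical
  induction s using Finset.induction with
  | empty => simpa using hm
  | insert i s _ ih =>
    have hdistrib : Nat.gcd (Nat.gcd (f i) (s.gcd f)) m =
        Nat.gcd (Nat.gcd (f i) m) (Nat.gcd (s.gcd f) m) := by
      rw [Nat.gcd_assoc, Nat.gcd_assoc, Nat.gcd_gcd_self_right_right]
    rw [Finset.gcd_insert]
    exact hdistrib ▸ hS _ (hf i (Finset.mem_insert_self i s)) _
      (ih fun j hj => hf j (Finset.mem_insert_of_mem hj))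

section CenterDvd

variable {G : Type*} [Group G]

theorem Subgroup.card_eq_card_center_add [Finite G] {K : Subgroup G} (hK : center G ≤ K) :
    Nat.card K = Nat.card (center G) + Nat.card {b : {y : G // y ∉ center G} // b.1 ∈ K} := by
  classical
  rw [← Nat.card_sum]
  refine Nat.card_congr ((Equiv.sumCompl fun g : K => g.1 ∈ center G).symm.trans
    (Equiv.sumCongr ?_ ?_))
  · exact (Equiv.subtypeSubtypeEquivSubtypeInter (· ∈ K) (· ∈ center G)).trans
      (Equiv.subtypeEquivRight fun g => and_iff_right_of_imp (@hK g))
  · exact (Equiv.subtypeSubtypeEquivSubtypeInter (· ∈ K) (· ∉ center G)).trans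
      ((Equiv.subtypeEquivRight fun _ => and_comm).trans
        (Equiv.subtypeSubtypeEquivSubtypeInter (· ∉ center G) (· ∈ K)).symm)

theorem Subgroup.card_center_dvd_card_noncentral [Finite G] {K : Subgroup G}
    (hK : center G ≤ K) :
    Nat.card (center G) ∣ Nat.card {b : {y : G // y ∉ center G} // b.1 ∈ K} :=
  (Nat.dvd_add_right dvd_rfl).mp (card_eq_card_center_add hK ▸ card_dvd_of_le hK)

theorem Subgroup.index_centralizer_singleton (g : G) :
    (centralizer {g}).index = Nat.card (MulAction.orbit (ConjAct G) g) := by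
  rw [centralizer_eq_comap_stabilizer]
  exact (index_comap_of_surjective _ ConjAct.toConjAct.surjective).trans
    ((MulAction.index_stabilizer _ g).trans (Nat.card_coe_set_eq _).symm)

theorem Subgroup.exists_card_eq_pow_add_of_le {p n r : ℕ} (hp : p.Prime)
    (hn : Nat.card G = p ^ n) {L K : Subgroup G} (hLK : L ≤ K) (hr : Nat.card L = p ^ r) :
    ∃ m, Nat.card K = p ^ (r + m) := by
  obtain ⟨k, -, hk⟩ := (Nat.dvd_prime_pow hp).1 (hn ▸ K.card_subgroup_dvd_card)
  have hrk : r ≤ k :=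
    (Nat.pow_dvd_pow_iff_le_right hp.one_lt).1 (hr ▸ hk ▸ card_dvd_of_le hLK)
  exact ⟨k - r, by rw [hk, Nat.add_sub_cancel' hrk]⟩

end CenterDvd

namespace NCGraphIso

variable {G H : Type*} [Group G] [Group H]

theorem card_noncentral_mem_eq (φ : NCGraphIso G H) {K : Subgroup G} {L : Subgroup H}
    (hKL : ∀ b, b.1 ∈ K ↔ (φ.1 b).1 ∈ L) :
    Nat.card {b : {y : H // y ∉ center H} // b.1 ∈ L} =
      Nat.card {b : {x : G // x ∉ center G} // b.1 ∈ K} :=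
  (Nat.card_congr (Equiv.subtypeEquiv φ.1 hKL)).symm

theorem mem_centralizer_iff (φ : NCGraphIso G H) (x b : {x : G // x ∉ center G}) :
    b.1 ∈ centralizer {x.1} ↔ (φ.1 b).1 ∈ centralizer {(φ.1 x).1} := by
  simp only [mem_centralizer_singleton_iff, ← commute_iff_eq]
  exact φ.2 b x

theorem card_center_dvd_card_sub [Finite G] [Finite H] (φ : NCGraphIso G H)
    {K : Subgroup G} {L : Subgroup H} (hK : center G ≤ K) (hL : center H ≤ L)
    (hKL : ∀ b, b.1 ∈ K ↔ (φ.1 b).1 ∈ L) :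
    Nat.card (center H) ∣ Nat.card K - Nat.card (center G) := by
  rw [card_eq_card_center_add hK, Nat.add_sub_cancel_left, ← φ.card_noncentral_mem_eq hKL]
  exact card_center_dvd_card_noncentral hL

end NCGraphIso

theorem stmt6_general (p : ℕ) (hp : p.Prime) (P : Type*) [Group P] [Finite P]
    (n r k : ℕ) (hn : Nat.card P = p ^ n) (hr : Nat.card (center P) = p ^ r)
    (a : Fin k → ℕ)
    (ha2 : ∀ i, ∃ g : P, g ∉ center P ∧ Nat.card (MulAction.orbit (ConjAct P) g) = p ^ a i)
    (u : ℕ) (hu : u = Nat.gcd (Finset.univ.gcd a) (n - r))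
    (H : Type*) [Group H] [Finite H]
    (φ : NCGraphIso P H) :
    Nat.card (center H) ∣ p ^ r * (p ^ u - 1) := by
  have hdvd {K : Subgroup P} {L : Subgroup H} {m : ℕ} (hK : center P ≤ K) (hL : center H ≤ L)
      (hKL : ∀ b, b.1 ∈ K ↔ (φ.1 b).1 ∈ L) (hm : Nat.card K = p ^ (r + m)) :
      Nat.card (center H) ∣ p ^ r * (p ^ m - 1) := by
    have := φ.card_center_dvd_card_sub hK hL hKL
    rwa [hm, hr, pow_add, ← Nat.mul_sub_one] at this
  have hpow := Nat.pow_right_injective hp.two_le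
  have htop : Nat.card (center H) ∣ p ^ r * (p ^ (n - r) - 1) := by
    obtain ⟨m, hm⟩ := exists_card_eq_pow_add_of_le hp hn le_top hr
    have hmn : r + m = n := hpow (hm.symm.trans (card_top.trans hn))
    exact hdvd le_top le_top (by simp) (by rw [hm, ← hmn, Nat.add_sub_cancel_left])
  have hclass (i : Fin k) : Nat.card (center H) ∣ p ^ r * (p ^ Nat.gcd (a i) (n - r) - 1) := by
    obtain ⟨g, hg, horb⟩ := ha2 i
    obtain ⟨m, hm⟩ := exists_card_eq_pow_add_of_le hp hn (center_le_centralizer {g}) hr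
    have hsum : n - r = a i + m := by
      have := (centralizer {g}).card_mul_index
      rw [index_centralizer_singleton, horb, hm, hn, ← pow_add] at this
      have := hpow this
      omega
    have hC := hdvd (center_le_centralizer {g}) (center_le_centralizer _)
      (φ.mem_centralizer_iff ⟨g, hg⟩) hm
    rw [hsum] at htop ⊢
    have := Nat.dvd_mul_pow_gcd_sub_one hC htop
    rwa [Nat.gcd_add_self_right, Nat.gcd_comm, ← Nat.gcd_self_add_right] at this
  exact hu ▸ Finset.univ.gcd_gcd_mem_of_gcd_mem a (S := {x | _ ∣ p ^ r * (p ^ x - 1)})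
    (fun _ hx _ hy => Nat.dvd_mul_pow_gcd_sub_one hx hy) htop (fun i _ => hclass i)

theorem stmt6 (p : ℕ) (hp : p.Prime) (P : Type*) [Group P] [Finite P]
    (hP : IsPGroup p P) (hPna : ¬ ∀ a b : P, a * b = b * a)
    (n r k : ℕ) (hn : Nat.card P = p ^ n) (hr : Nat.card (center P) = p ^ r)
    (a : Fin k → ℕ)
    (ha1 : ∀ g : P, g ∉ center P → ∃ i, Nat.card (MulAction.orbit (ConjAct P) g) = p ^ a i)
    (ha2 : ∀ i, ∃ g : P, g ∉ center P ∧ Nat.card (MulAction.orbit (ConjAct P) g) = p ^ a i)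
    (u : ℕ) (hu : u = Nat.gcd (Finset.univ.gcd a) (n - r))
    (H : Type*) [Group H] [Finite H] (hH : ¬ ∀ a b : H, a * b = b * a)
    (φ : NCGraphIso P H) :
    Nat.card (center H) ∣ p ^ r * (p ^ u - 1) :=
  stmt6_general p hp P n r k hn hr a ha2 u hu H φ
end

section
/- Let G be a finite non-abelian AC-group (every centralizer of a non-central element is abelian) such that G/Z(G) is a p-group. Then ω(G) ≡ 1 (mod p), where ω(G) is the maximum number of pairwise non-commuting elements of G. -/
open Subgroup

theorem stmt7 (p : ℕ) (hp : p.Prime) (G : Type*) [Group G] [Finite G]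
    (hna : ¬ ∀ a b : G, a * b = b * a)
    (hAC : ∀ x : G, x ∉ center G → ∀ a ∈ centralizer {x}, ∀ b ∈ centralizer {x}, a * b = b * a)
    (hpq : IsPGroup p (G ⧸ center G))
    (w : ℕ)
    (hw : IsGreatest {n : ℕ | ∃ S : Finset G, S.card = n ∧
            ∀ x ∈ S, ∀ y ∈ S, x ≠ y → ¬ Commute x y} w) :
    w % p = 1 % p := by
  classical
  haveI := Fintype.ofFinite G
  haveI := Fact.mk hp
  -- key AC lemma: commuting noncentral elements have equal centralizers
  have key : ∀ x ∉ center G, ∀ y, y ∉ center G → Commute x y →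
      centralizer {x} ≤ centralizer {y} := by
    intro x hx y _hy h a ha
    have hyx : y ∈ centralizer {x} := mem_centralizer_singleton_iff.mpr h.symm.eq
    have := hAC x hx a ha y hyx
    exact mem_centralizer_singleton_iff.mpr this
  have ceq : ∀ x ∉ center G, ∀ y, y ∉ center G → Commute x y →
      centralizer {x} = centralizer {y} := fun x hx y hy h =>
    le_antisymm (key x hx y hy h) (key y hy x hx h.symm)
  have cne : ∀ x y : G, centralizer ({x} : Set G) = centralizer {y} → Commute x y := by
    intro x y h
    have : y ∈ centralizer ({y} : Set G) := mem_centralizer_singleton_iff.mpr rfl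
    rw [← h, mem_centralizer_singleton_iff] at this
    exact this.symm
  -- obtain the maximal clique
  obtain ⟨S, hScard, hScl⟩ := hw.1
  push_neg at hna
  obtain ⟨a, b, hab⟩ := hna
  have hane : a ≠ b := by rintro rfl; exact hab rfl
  have hw2 : 2 ≤ w := by
    refine hw.2 ⟨{a, b}, Finset.card_pair hane, ?_⟩
    intro x hx y hy hxy
    simp only [Finset.mem_insert, Finset.mem_singleton] at hx hy
    rcases hx with rfl | rfl <;> rcases hy with rfl | rfl
    · exact absurd rfl hxy
    · exact hab
    · exact fun h => hab h.symm.eq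
    · exact absurd rfl hxy
  -- all elements of S are noncentral
  have hSnc : ∀ x ∈ S, x ∉ center G := by
    intro x hxS hxZ
    obtain ⟨y, hyS, hyx⟩ := Finset.exists_mem_ne (s := S) (by omega) x
    exact hScl x hxS y hyS (Ne.symm hyx) ((mem_center_iff.mp hxZ y).symm)
  -- covering: every noncentral element commutes with some element of S
  have hcov : ∀ g : G, g ∉ center G → ∃ x ∈ S, Commute x g := by
    intro g hg
    by_contra hno
    push_neg at hno
    have hgS : g ∉ S := fun h => hno g h (Commute.refl g)
    have : S.card + 1 ≤ w := by
      refine hw.2 ⟨insert g S, by rw [Finset.card_insert_of_notMem hgS], ?_⟩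
      intro x hx y hy hxy
      rw [Finset.mem_insert] at hx hy
      rcases hx with rfl | hx <;> rcases hy with rfl | hy
      · exact absurd rfl hxy
      · exact fun h => hno y hy h.symm
      · exact fun h => hno x hx h
      · exact hScl x hx y hy hxy
    omega
  -- finset versions of subgroups
  set Zt : Finset G := Finset.univ.filter (· ∈ center G) with hZt
  have Ct : G → Finset G := fun x => Finset.univ.filter (· ∈ centralizer {x})
  have hCt : ∀ x g : G, g ∈ Finset.univ.filter (· ∈ centralizer ({x} : Set G)) ↔
      g ∈ centralizer ({x} : Set G) := by
    intro x g; simp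
  -- card facts
  have hZcard : Zt.card = Nat.card (center G) := by
    rw [Nat.card_eq_fintype_card, Fintype.card_subtype]
  have hCcard : ∀ x : G, (Finset.univ.filter (· ∈ centralizer ({x} : Set G))).card
      = Nat.card (centralizer ({x} : Set G)) := by
    intro x
    rw [Nat.card_eq_fintype_card, Fintype.card_subtype]
  -- t x : order of centralizer mod center
  set t : G → ℕ := fun x =>
    Nat.card ((centralizer ({x} : Set G)) ⧸ ((center G).subgroupOf (centralizer {x}))) with ht
  have hCeq : ∀ x : G, Nat.card (centralizer ({x} : Set G)) = t x * Nat.card (center G) := by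
    intro x
    have h1 := Subgroup.card_eq_card_quotient_mul_card_subgroup
      ((center G).subgroupOf (centralizer ({x} : Set G)))
    have h2 : Nat.card ((center G).subgroupOf (centralizer ({x} : Set G))) =
        Nat.card (center G) :=
      Nat.card_congr (subgroupOfEquivOfLe (center_le_centralizer {x})).toEquiv
    rw [h1, h2]
  have htp : ∀ x, x ∉ center G → p ∣ t x := by
    intro x hx
    have hxC : x ∈ centralizer ({x} : Set G) := mem_centralizer_singleton_iff.mpr rfl
    -- the quotient is a p-group
    set f : (centralizer ({x} : Set G)) →* G ⧸ center G :=
      (QuotientGroup.mk' (center G)).comp (centralizer ({x} : Set G)).subtype with hf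
    have hker : f.ker = (center G).subgroupOf (centralizer ({x} : Set G)) := by
      ext a
      simp [hf, MonoidHom.mem_ker, QuotientGroup.eq_one_iff, Subgroup.mem_subgroupOf]
    have hpc : IsPGroup p ((centralizer ({x} : Set G)) ⧸
        ((center G).subgroupOf (centralizer ({x} : Set G)))) := by
      have h1 : IsPGroup p ((centralizer ({x} : Set G)) ⧸ f.ker) :=
        hpq.of_injective (QuotientGroup.kerLift f) (QuotientGroup.kerLift_injective f)
      have e := (QuotientGroup.quotientMulEquivOfEq hker).symm
      exact h1.of_injective e.toMonoidHom e.injective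
    obtain ⟨n, hn⟩ := IsPGroup.iff_card.mp hpc
    haveI hnt : Nontrivial ((centralizer ({x} : Set G)) ⧸
        ((center G).subgroupOf (centralizer ({x} : Set G)))) := by
      refine ⟨QuotientGroup.mk ⟨x, hxC⟩, 1, ?_⟩
      rw [Ne, QuotientGroup.eq_one_iff, Subgroup.mem_subgroupOf]
      exact hx
    have hn' : t x = p ^ n := hn
    have h1 : 1 < t x := by
      rw [ht]
      exact Finite.one_lt_card
    have hn0 : n ≠ 0 := by
      rintro rfl
      rw [pow_zero] at hn'
      omega
    rw [hn']
    exact dvd_pow_self p hn0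
  have htpos : ∀ x : G, 1 ≤ t x := fun x => Nat.one_le_iff_ne_zero.mpr (Nat.card_ne_zero.mpr
    ⟨inferInstance, inferInstance⟩)
  -- the partition of G
  have hdisj : ∀ x ∈ S, ∀ y ∈ S, x ≠ y →
      Disjoint (Finset.univ.filter (· ∈ centralizer ({x} : Set G)) \ Zt)
        (Finset.univ.filter (· ∈ centralizer ({y} : Set G)) \ Zt) := by
    intro x hxS y hyS hxy
    rw [Finset.disjoint_left]
    intro g hg1 hg2
    rw [Finset.mem_sdiff, hCt] at hg1 hg2
    have hgZ : g ∉ center G := by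
      intro h; exact hg1.2 (by simp [hZt, h])
    have h1 : Commute x g := mem_centralizer_singleton_iff.mp hg1.1 |>.symm
    have h2 : Commute y g := mem_centralizer_singleton_iff.mp hg2.1 |>.symm
    have e1 := ceq x (hSnc x hxS) g hgZ h1
    have e2 := ceq y (hSnc y hyS) g hgZ h2
    exact hScl x hxS y hyS hxy (cne x y (e1.trans e2.symm))
  have hcover : (Finset.univ : Finset G) =
      Zt ∪ S.biUnion (fun x => Finset.univ.filter (· ∈ centralizer ({x} : Set G)) \ Zt) := by
    ext g
    simp only [Finset.mem_univ, true_iff, Finset.mem_union, Finset.mem_biUnion]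
    by_cases hg : g ∈ center G
    · left; simp [hZt, hg]
    · right
      obtain ⟨x, hxS, hxg⟩ := hcov g hg
      exact ⟨x, hxS, by
        rw [Finset.mem_sdiff, hCt]
        exact ⟨mem_centralizer_singleton_iff.mpr hxg.symm.eq, by simp [hZt, hg]⟩⟩
  have hZsub : ∀ x : G, Zt ⊆ Finset.univ.filter (· ∈ centralizer ({x} : Set G)) := by
    intro x g hg
    rw [hCt]
    exact center_le_centralizer {x} (by simpa [hZt] using hg)
  have hdisjZ : Disjoint Zt
      (S.biUnion (fun x => Finset.univ.filter (· ∈ centralizer ({x} : Set G)) \ Zt)) := by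
    rw [Finset.disjoint_right]
    intro g hg
    rw [Finset.mem_biUnion] at hg
    obtain ⟨x, _, hgx⟩ := hg
    exact (Finset.mem_sdiff.mp hgx).2
  -- count
  have hcount : Fintype.card G = Zt.card +
      ∑ x ∈ S, (Nat.card (centralizer ({x} : Set G)) - Nat.card (center G)) := by
    rw [← Finset.card_univ, hcover, Finset.card_union_of_disjoint hdisjZ,
      Finset.card_biUnion hdisj]
    congr 1
    refine Finset.sum_congr rfl fun x _ => ?_
    rw [Finset.card_sdiff_of_subset (hZsub x), hCcard, hZcard]
  -- global card
  have hGcard : Nat.card G = Nat.card (G ⧸ center G) * Nat.card (center G) :=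
    Subgroup.card_eq_card_quotient_mul_card_subgroup (center G)
  obtain ⟨n, hn⟩ := IsPGroup.iff_card.mp hpq
  have hQne1 : Nat.card (G ⧸ center G) ≠ 1 := by
    intro h1
    have hsub : Subsingleton (G ⧸ center G) := by
      rcases (Nat.card_eq_one_iff_unique).mp h1 with ⟨h, _⟩
      exact h
    have : a ∈ center G := by
      rw [← QuotientGroup.eq_one_iff]
      exact Subsingleton.elim _ _
    exact hab (mem_center_iff.mp this b).symm
  have hpQ : p ∣ Nat.card (G ⧸ center G) := by
    rw [hn] at hQne1 ⊢
    rcases n with _ | n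
    · simp at hQne1
    · exact dvd_pow_self p (Nat.succ_ne_zero n)
  -- assemble arithmetic
  set z := Nat.card (center G) with hz
  have hzpos : 0 < z := Nat.card_pos
  set Q := Nat.card (G ⧸ center G) with hQ
  have hE : Q * z = z + (∑ x ∈ S, (t x - 1)) * z := by
    calc Q * z = Nat.card G := hGcard.symm
      _ = Fintype.card G := Nat.card_eq_fintype_card
      _ = Zt.card + ∑ x ∈ S, (Nat.card (centralizer ({x} : Set G)) - z) := hcount
      _ = z + (∑ x ∈ S, (t x - 1)) * z := by
          rw [hZcard, Finset.sum_mul]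
          congr 1
          refine Finset.sum_congr rfl fun x _ => ?_
          rw [hCeq x, Nat.sub_mul, one_mul]
  have hQeq : Q = 1 + ∑ x ∈ S, (t x - 1) := by
    have := hE
    rw [show z + (∑ x ∈ S, (t x - 1)) * z = (1 + ∑ x ∈ S, (t x - 1)) * z by ring] at this
    exact Nat.eq_of_mul_eq_mul_right hzpos this
  have hsumt : ∑ x ∈ S, t x = (∑ x ∈ S, (t x - 1)) + w := by
    calc ∑ x ∈ S, t x = ∑ x ∈ S, ((t x - 1) + 1) :=
          Finset.sum_congr rfl fun x _ => (Nat.sub_add_cancel (htpos x)).symm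
      _ = (∑ x ∈ S, (t x - 1)) + ∑ _x ∈ S, 1 := Finset.sum_add_distrib
      _ = (∑ x ∈ S, (t x - 1)) + w := by
          rw [Finset.sum_const, smul_eq_mul, mul_one, hScard]
  have hfinal : w + Q = (∑ x ∈ S, t x) + 1 := by
    rw [hQeq, hsumt]; ring
  have hpsum : p ∣ ∑ x ∈ S, t x :=
    Finset.dvd_sum fun x hx => htp x (hSnc x hx)
  obtain ⟨q, hq⟩ := hpQ
  obtain ⟨s, hs⟩ := hpsum
  rw [hq, hs] at hfinal
  calc w % p = (w + p * q) % p := (Nat.add_mul_mod_self_left w p q).symm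
    _ = (p * s + 1) % p := by rw [hfinal]
    _ = 1 % p := Nat.mul_add_mod p s 1
end

section
/- Let G be an AC-group and let x, y ∈ G \ Z(G) be commuting elements. Then C_G(x) = C_G(y). -/
open Subgroup

theorem stmt9 (G : Type*) [Group G]
    (hAC : ∀ x : G, x ∉ center G → ∀ a ∈ centralizer {x}, ∀ b ∈ centralizer {x}, a * b = b * a)
    (x y : G) (hx : x ∉ center G) (hy : y ∉ center G) (hxy : Commute x y) :
    (centralizer {x} : Subgroup G) = centralizer {y} := by
  have hyx : y ∈ centralizer ({x} : Set G) := by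
    rw [mem_centralizer_singleton_iff]; exact hxy.symm
  have hxy' : x ∈ centralizer ({y} : Set G) := by
    rw [mem_centralizer_singleton_iff]; exact hxy
  ext a
  simp only [mem_centralizer_singleton_iff]
  constructor
  · intro ha
    exact hAC x hx a (by rw [mem_centralizer_singleton_iff]; exact ha) y hyx
  · intro ha
    exact hAC y hy a (by rw [mem_centralizer_singleton_iff]; exact ha) x hxy'
end

section
/- Let C be a subgroup of a group G and let a ∈ G be such that C·C^a = C^a·C (i.e., the product set is a subgroup). Then C·C^a = C·[C, a], where [C, a] is the subgroup generated by all commutators [c, a] = c⁻¹c^a for c ∈ C. -/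
open Subgroup Pointwise

theorem stmt11 (G : Type*) [Group G] (C : Subgroup G) (a : G)
    (Ca : Set G) (hCa : Ca = (fun c => a⁻¹ * c * a) '' (C : Set G))
    (h : (C : Set G) * Ca = Ca * (C : Set G)) :
    (C : Set G) * Ca =
      (C : Set G) * (closure {x : G | ∃ c ∈ C, x = c⁻¹ * (a⁻¹ * c * a)} : Subgroup G) := by
  have hone : (1 : G) ∈ Ca := by
    rw [hCa]; exact ⟨1, C.one_mem, by group⟩
  have hCaMul : ∀ x ∈ Ca, ∀ y ∈ Ca, x * y ∈ Ca := by
    rintro x hx y hy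
    rw [hCa] at hx hy ⊢
    obtain ⟨c₁, hc₁, rfl⟩ := hx
    obtain ⟨c₂, hc₂, rfl⟩ := hy
    exact ⟨c₁ * c₂, C.mul_mem hc₁ hc₂, by group⟩
  have hCaInv : ∀ x ∈ Ca, x⁻¹ ∈ Ca := by
    rintro x hx
    rw [hCa] at hx ⊢
    obtain ⟨c, hc, rfl⟩ := hx
    exact ⟨c⁻¹, C.inv_mem hc, by group⟩
  -- S = C * Ca is a subgroup
  set S' : Subgroup G :=
    { carrier := (C : Set G) * Ca
      one_mem' := ⟨1, C.one_mem, 1, hone, by simp⟩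
      mul_mem' := by
        rintro x y ⟨c₁, hc₁, k₁, hk₁, rfl⟩ ⟨c₂, hc₂, k₂, hk₂, rfl⟩
        have hmem : k₁ * c₂ ∈ Ca * (C : Set G) := ⟨k₁, hk₁, c₂, hc₂, rfl⟩
        rw [← h] at hmem
        obtain ⟨c₃, hc₃, k₃, hk₃, he⟩ := hmem
        refine ⟨c₁ * c₃, C.mul_mem hc₁ hc₃, k₃ * k₂, hCaMul _ hk₃ _ hk₂, ?_⟩
        calc c₁ * c₃ * (k₃ * k₂) = c₁ * (c₃ * k₃) * k₂ := by group
          _ = c₁ * (k₁ * c₂) * k₂ := by rw [show c₃ * k₃ = k₁ * c₂ from he]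
          _ = c₁ * k₁ * (c₂ * k₂) := by group
      inv_mem' := by
        rintro x ⟨c, hc, k, hk, rfl⟩
        have hmem : k⁻¹ * c⁻¹ ∈ Ca * (C : Set G) :=
          ⟨k⁻¹, hCaInv _ hk, c⁻¹, C.inv_mem hc, rfl⟩
        rw [← h] at hmem
        simpa [mul_inv_rev] using hmem } with hS'
  have hcle : closure {x : G | ∃ c ∈ C, x = c⁻¹ * (a⁻¹ * c * a)} ≤ S' := by
    rw [closure_le]
    rintro x ⟨c, hc, rfl⟩
    exact ⟨c⁻¹, C.inv_mem hc, a⁻¹ * c * a, by rw [hCa]; exact ⟨c, hc, rfl⟩, by group⟩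
  ext x
  constructor
  · rintro ⟨c₁, hc₁, k, hk, rfl⟩
    rw [hCa] at hk
    obtain ⟨c₂, hc₂, rfl⟩ := hk
    refine ⟨c₁ * c₂, C.mul_mem hc₁ hc₂, c₂⁻¹ * (a⁻¹ * c₂ * a),
      subset_closure ⟨c₂, hc₂, rfl⟩, by group⟩
  · rintro ⟨c, hc, d, hd, rfl⟩
    have h1 : c ∈ S' := ⟨c, hc, 1, hone, mul_one c⟩
    exact S'.mul_mem h1 (hcle hd)
end

section
/- Let G be a finite nilpotent AC-group of nilpotency class greater than 2. Then for all x, x' ∈ Z₂(G) \ Z(G), C_G(x) = C_G(x'); moreover this common centralizer is the unique normal member of the set {C_G(y) : y ∈ G \ Z(G)}, is a characteristic subgroup of G, and has maximal order among all centralizers of non-central elements. -/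
/-!
In an AC-group two commuting non-central elements have the same centralizer. Every element of
`Z₂(G)` commutes with every commutator, and class `> 2` provides a non-central commutator, so all
of `Z₂(G) \ Z(G)` share one centralizer `M`, which automorphisms therefore preserve. A normal
centralizer `C(y)` meets `Z₂(G) \ Z(G)` because `G` is nilpotent, hence equals `M`.
If `C(y) ≠ M` then `C(y) ∩ M = Z(G)`, and some `t` has `⁅t, c⁆ ∉ Z(G)` for every non-central
`c ∈ C(y)` (otherwise `y ∈ Z₂(G)`); then `c ↦ ⁅t, c⁆` embeds `C(y) / Z(G)` into `M / Z(G)`.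
-/

open Subgroup commutatorElement

namespace Subgroup

variable {G : Type*} [Group G]

theorem commutatorElement_mul_of_mem_center {z₁ z₂ : G} (h₁ : z₁ ∈ center G) (h₂ : z₂ ∈ center G)
    (a b : G) : ⁅z₁ * a, z₂ * b⁆ = ⁅a, b⁆ := by
  have conj_eq {z : G} (hz : z ∈ center G) (g : G) : z * g * z⁻¹ = g := by
    rw [(mem_center_iff.mp hz g).symm, mul_inv_cancel_right]
  have hc₁ : ⁅z₁, z₂ * b⁆ = 1 :=
    commutatorElement_eq_one_iff_commute.mpr (mem_center_iff.mp h₁ _).symm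
  have hc₂ : ⁅a, z₂⁆ = 1 :=
    commutatorElement_eq_one_iff_commute.mpr (mem_center_iff.mp h₂ a)
  rw [commutatorElement_mul_left_eq_conj_mul, commutatorElement_mul_right_eq_mul_conj, hc₁, hc₂,
    one_mul, conj_eq h₂, conj_eq h₁, mul_one]

theorem mem_upperCentralSeries_two_iff {w : G} :
    w ∈ upperCentralSeries G 2 ↔ ∀ g, ⁅w, g⁆ ∈ center G := by
  rw [← upperCentralSeries_one]
  exact mem_upperCentralSeries_succ_iff

theorem commute_commutatorElement_of_commutatorElement_mem_center {w a b : G}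
    (ha : ⁅w, a⁆ ∈ center G) (hb : ⁅w, b⁆ ∈ center G) : Commute w ⁅a, b⁆ := by
  have hconj (g : G) : w * g * w⁻¹ = ⁅w, g⁆ * g := by rw [commutatorElement_def]; group
  rw [Commute, SemiconjBy, ← mul_inv_eq_iff_eq_mul, conjugate_commutatorElement, hconj, hconj,
    commutatorElement_mul_of_mem_center ha hb]

theorem commute_commutatorElement_of_mem_upperCentralSeries_two {w : G}
    (hw : w ∈ upperCentralSeries G 2) (a b : G) : Commute w ⁅a, b⁆ :=
  commute_commutatorElement_of_commutatorElement_mem_center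
    (mem_upperCentralSeries_two_iff.mp hw a) (mem_upperCentralSeries_two_iff.mp hw b)

theorem exists_commutatorElement_notMem_center [Group.IsNilpotent G]
    (hclass : 2 < Group.nilpotencyClass G) : ∃ a b : G, ⁅a, b⁆ ∉ center G := by
  by_contra! h
  have : upperCentralSeries G 2 = ⊤ :=
    eq_top_iff.mpr fun w _ => mem_upperCentralSeries_two_iff.mpr (h w)
  exact hclass.not_ge (upperCentralSeries_eq_top_iff_nilpotencyClass_le.mp this)

theorem inf_upperCentralSeries_le_center {N : Subgroup G} [N.Normal]
    (h : N ⊓ upperCentralSeries G 2 ≤ center G) (n : ℕ) :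
    N ⊓ upperCentralSeries G n ≤ center G := by
  induction n with
  | zero => simp
  | succ n ih =>
    rintro g ⟨hgN, hgn⟩
    refine h ⟨hgN, mem_upperCentralSeries_two_iff.mpr fun k => ih ⟨?_, hgn k⟩⟩
    rw [show ⁅g, k⁆ = g * (k * g⁻¹ * k⁻¹) by group]
    exact mul_mem hgN (Normal.conj_mem inferInstance _ (inv_mem hgN) k)

theorem le_center_of_inf_upperCentralSeries_two_le_center [Group.IsNilpotent G]
    {N : Subgroup G} [N.Normal] (h : N ⊓ upperCentralSeries G 2 ≤ center G) : N ≤ center G := by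
  simpa using inf_upperCentralSeries_le_center h (Group.nilpotencyClass G)

theorem Characteristic.apply_mem_iff {H : Subgroup G} [hH : H.Characteristic] (φ : G ≃* G)
    {g : G} : φ g ∈ H ↔ g ∈ H :=
  SetLike.ext_iff.mp (hH.fixed φ) g

theorem comap_centralizer_singleton (φ : G ≃* G) (x : G) :
    (centralizer {x}).comap φ.toMonoidHom = centralizer {φ.symm x} := by
  ext g
  simp only [mem_comap, mem_centralizer_singleton_iff, MulEquiv.coe_toMonoidHom]
  rw [← φ.symm.injective.eq_iff]
  simp

theorem card_le_card_of_inv_mul_mem_iff {N A M : Subgroup G} [Finite M] (hA : N ≤ A)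
    (hM : N ≤ M) (f : A → M) (hf : ∀ a b : A, (f a : G)⁻¹ * f b ∈ N ↔ (a : G)⁻¹ * b ∈ N) :
    Nat.card A ≤ Nat.card M := by
  let F : A ⧸ N.subgroupOf A → M ⧸ N.subgroupOf M :=
    Quotient.map' f fun a b h => by
      rw [QuotientGroup.leftRel_apply, mem_subgroupOf, coe_mul, coe_inv] at h ⊢
      exact (hf a b).2 h
  have hF : F.Injective := by
    rintro ⟨a⟩ ⟨b⟩ h
    refine Quotient.sound' ?_
    have hab := Quotient.exact' h
    rw [QuotientGroup.leftRel_apply, mem_subgroupOf, coe_mul, coe_inv] at hab ⊢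
    exact (hf a b).1 hab
  rw [card_eq_card_quotient_mul_card_subgroup (N.subgroupOf A),
    card_eq_card_quotient_mul_card_subgroup (N.subgroupOf M),
    Nat.card_congr (subgroupOfEquivOfLe hA).toEquiv,
    Nat.card_congr (subgroupOfEquivOfLe hM).toEquiv]
  exact Nat.mul_le_mul_right _ (Nat.card_le_card_of_injective F hF)

end Subgroup

def IsACGroup (G : Type*) [Group G] : Prop :=
  ∀ x : G, x ∉ center G → ∀ a ∈ centralizer {x}, ∀ b ∈ centralizer {x}, a * b = b * a

namespace IsACGroup

variable {G : Type*} [Group G]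

theorem centralizer_eq_of_commute (hAC : IsACGroup G) {u v : G} (hu : u ∉ center G)
    (hv : v ∉ center G) (huv : Commute u v) : centralizer {u} = centralizer {v} := by
  have hvu : v ∈ centralizer {u} := mem_centralizer_singleton_iff.mpr huv.eq.symm
  have huv' : u ∈ centralizer {v} := mem_centralizer_singleton_iff.mpr huv.eq
  ext g
  constructor
  · intro hg
    exact mem_centralizer_singleton_iff.mpr (hAC u hu g hg v hvu)
  · intro hg
    exact mem_centralizer_singleton_iff.mpr (hAC v hv g hg u huv')

theorem mem_center_of_mem_centralizer_of_ne (hAC : IsACGroup G) {x y c : G} (hx : x ∉ center G)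
    (hy : y ∉ center G) (hxy : centralizer {y} ≠ centralizer {x})
    (hcy : c ∈ centralizer {y}) (hcx : c ∈ centralizer {x}) : c ∈ center G := by
  by_contra hc
  refine hxy ((hAC.centralizer_eq_of_commute hy hc ?_).trans
    (hAC.centralizer_eq_of_commute hx hc ?_).symm)
  · exact (mem_centralizer_singleton_iff.mp hcy).symm
  · exact (mem_centralizer_singleton_iff.mp hcx).symm

theorem centralizer_eq_of_mem_upperCentralSeries_two [Group.IsNilpotent G] (hAC : IsACGroup G)
    (hclass : 2 < Group.nilpotencyClass G) {x x' : G}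
    (hx2 : x ∈ Subgroup.upperCentralSeries G 2) (hx : x ∉ center G)
    (hx'2 : x' ∈ Subgroup.upperCentralSeries G 2) (hx' : x' ∉ center G) :
    centralizer {x} = centralizer {x'} := by
  obtain ⟨a, b, hab⟩ := exists_commutatorElement_notMem_center hclass
  exact (hAC.centralizer_eq_of_commute hx hab
    (commute_commutatorElement_of_mem_upperCentralSeries_two hx2 a b)).trans
    (hAC.centralizer_eq_of_commute hx' hab
      (commute_commutatorElement_of_mem_upperCentralSeries_two hx'2 a b)).symm

theorem characteristic_centralizer [Group.IsNilpotent G] (hAC : IsACGroup G)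
    (hclass : 2 < Group.nilpotencyClass G) {x : G}
    (hx2 : x ∈ Subgroup.upperCentralSeries G 2) (hx : x ∉ center G) :
    (centralizer {x}).Characteristic := by
  refine characteristic_iff_comap_eq.mpr fun φ => ?_
  rw [comap_centralizer_singleton]
  refine (hAC.centralizer_eq_of_mem_upperCentralSeries_two hclass hx2 hx ?_ ?_).symm
  · exact (Characteristic.apply_mem_iff φ.symm).mpr hx2
  · exact mt (Characteristic.apply_mem_iff φ.symm).mp hx

theorem centralizer_eq_of_normal [Group.IsNilpotent G] (hAC : IsACGroup G)
    (hclass : 2 < Group.nilpotencyClass G) {x y : G}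
    (hx2 : x ∈ Subgroup.upperCentralSeries G 2) (hx : x ∉ center G) (hy : y ∉ center G)
    [(centralizer {y}).Normal] : centralizer {y} = centralizer {x} := by
  obtain ⟨w, ⟨hwy, hw2⟩, hw⟩ :
      ∃ w ∈ centralizer {y} ⊓ Subgroup.upperCentralSeries G 2, w ∉ center G := by
    by_contra! h
    exact hy (le_center_of_inf_upperCentralSeries_two_le_center h
      (mem_centralizer_singleton_iff.mpr rfl))
  rw [hAC.centralizer_eq_of_commute hy hw (mem_centralizer_singleton_iff.mp hwy).symm]
  exact hAC.centralizer_eq_of_mem_upperCentralSeries_two hclass hw2 hw hx2 hx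

theorem commutatorElement_mem_center_of_mem_centralizer (hAC : IsACGroup G) {x y c t : G}
    (hx2 : x ∈ Subgroup.upperCentralSeries G 2) (hx : x ∉ center G) (hy : y ∉ center G)
    (hxy : centralizer {y} ≠ centralizer {x}) (hcy : c ∈ centralizer {y}) (hc : c ∉ center G)
    (htc : ⁅t, c⁆ ∈ center G) : ⁅t, y⁆ ∈ center G := by
  -- conjugation by `c` fixes `y` and moves `t` by a central factor
  have hcty : Commute c ⁅t, y⁆ := by
    refine commute_commutatorElement_of_commutatorElement_mem_center ?_ ?_
    · rw [← commutatorElement_inv]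
      exact inv_mem htc
    · rw [commutatorElement_eq_one_iff_commute.mpr (mem_centralizer_singleton_iff.mp hcy)]
      exact one_mem _
  by_contra hty
  have hxty : centralizer {⁅t, y⁆} = centralizer {x} := hAC.centralizer_eq_of_commute hty hx
    (commute_commutatorElement_of_mem_upperCentralSeries_two hx2 t y).symm
  refine hc (hAC.mem_center_of_mem_centralizer_of_ne hx hy hxy hcy ?_)
  exact hxty ▸ mem_centralizer_singleton_iff.mpr hcty.eq

theorem exists_mem_center_of_commutatorElement_mem_center [Group.IsNilpotent G] (hAC : IsACGroup G)
    (hclass : 2 < Group.nilpotencyClass G) {x y : G}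
    (hx2 : x ∈ Subgroup.upperCentralSeries G 2) (hx : x ∉ center G) (hy : y ∉ center G)
    (hxy : centralizer {y} ≠ centralizer {x}) :
    ∃ t : G, ∀ c ∈ centralizer {y}, ⁅t, c⁆ ∈ center G → c ∈ center G := by
  by_contra! h
  refine hxy (hAC.centralizer_eq_of_mem_upperCentralSeries_two hclass ?_ hy hx2 hx)
  refine mem_upperCentralSeries_two_iff.mpr fun t => ?_
  obtain ⟨c, hcy, htc, hc⟩ := h t
  rw [← commutatorElement_inv]
  exact inv_mem (hAC.commutatorElement_mem_center_of_mem_centralizer hx2 hx hy hxy hcy hc htc)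

theorem card_centralizer_le [Finite G] [Group.IsNilpotent G] (hAC : IsACGroup G)
    (hclass : 2 < Group.nilpotencyClass G) {x y : G}
    (hx2 : x ∈ Subgroup.upperCentralSeries G 2) (hx : x ∉ center G) (hy : y ∉ center G) :
    Nat.card (centralizer {y}) ≤ Nat.card (centralizer {x}) := by
  by_cases hxy : centralizer {y} = centralizer {x}
  · rw [hxy]
  obtain ⟨t, ht⟩ := hAC.exists_mem_center_of_commutatorElement_mem_center hclass hx2 hx hy hxy
  refine card_le_card_of_inv_mul_mem_iff (center_le_centralizer _) (center_le_centralizer _)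
    (fun c => ⟨⁅t, c⁆, mem_centralizer_singleton_iff.mpr
      (commute_commutatorElement_of_mem_upperCentralSeries_two hx2 t c).eq.symm⟩) fun a b => ?_
  have hab : ⁅t, (a : G)⁆⁻¹ * ⁅t, (b : G)⁆ = a * (⁅t, (a : G)⁻¹ * b⁆ * (a : G)⁻¹) := by
    simp only [commutatorElement_def]
    group
  rw [hab, (center G).normal_of_characteristic.mem_comm_iff, inv_mul_cancel_right]
  refine ⟨ht _ (mul_mem (inv_mem a.2) b.2), fun h => ?_⟩
  rw [commutatorElement_eq_one_iff_commute.mpr (mem_center_iff.mp h t)]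
  exact one_mem _

end IsACGroup

theorem stmt13 (G : Type*) [Group G] [Finite G]
    (hAC : ∀ x : G, x ∉ center G → ∀ a ∈ centralizer {x}, ∀ b ∈ centralizer {x}, a * b = b * a)
    (hnil : Group.IsNilpotent G) (hclass : 2 < Group.nilpotencyClass G)
    (x : G) (hx2 : x ∈ _root_.upperCentralSeries G 2) (hx : x ∉ center G) :
    (∀ x' : G, x' ∈ _root_.upperCentralSeries G 2 → x' ∉ center G →
        (centralizer {x} : Subgroup G) = centralizer {x'}) ∧
    (centralizer {x} : Subgroup G).Normal ∧
    (∀ y : G, y ∉ center G → (centralizer {y} : Subgroup G).Normal →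
        (centralizer {y} : Subgroup G) = centralizer {x}) ∧
    (centralizer {x} : Subgroup G).Characteristic ∧
    (∀ y : G, y ∉ center G →
        Nat.card (centralizer {y} : Subgroup G) ≤ Nat.card (centralizer {x} : Subgroup G)) := by
  have hAC : IsACGroup G := hAC
  have hchar := hAC.characteristic_centralizer hclass hx2 hx
  exact ⟨fun x' hx'2 hx' => hAC.centralizer_eq_of_mem_upperCentralSeries_two hclass hx2 hx hx'2 hx',
    inferInstance, fun y hy _ => hAC.centralizer_eq_of_normal hclass hx2 hx hy, hchar,
    fun y hy => hAC.card_centralizer_le hclass hx2 hx hy⟩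
end

section
/- Let G be a finite group with an abelian normal subgroup N of prime index such that G is non-abelian. Then the maximum number of pairwise non-commuting elements of G equals |N : Z(G)| + 1. -/
/-!
An abelian subgroup `N` of prime index is maximal, so for `a ∈ N` the centralizer of `a` is
either `N` or `G`, and for `x ∉ N` the centralizer `C(x)` meets `N` exactly in `Z(G)`. Hence
`C(x)` is a central extension of a cyclic group, so abelian. Fix `t ∉ N` and a transversal
`{t nᵢ}` of `Z(G)` in the coset `tN`, with `|N : Z(G)|` elements. These elements pairwise do
not commute, and neither do they commute with any `a ∈ N \ Z(G)`: this gives a clique of size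
`|N : Z(G)| + 1`. Conversely every `x ∉ N` commutes with some `t nᵢ`, whose centralizer is
abelian, and a clique meets `N` at most once: no clique is larger.
-/

open Subgroup

theorem Commute.inv_mul_of_mul_left {G : Type*} [Group G] {t n m : G} (hnm : Commute n m)
    (h : Commute (t * n) (t * m)) : Commute t (m⁻¹ * n) := by
  have h₁ : n * t * m = m * t * n := mul_left_cancel (a := t) (by simpa [mul_assoc] using h.eq)
  calc t * (m⁻¹ * n) = t * (n * m⁻¹) := by rw [hnm.inv_right.eq]
  _ = m⁻¹ * (m * t * n) * m⁻¹ := by group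
  _ = m⁻¹ * n * t := by rw [← h₁]; group

namespace Subgroup

variable {G : Type*} [Group G] {N : Subgroup G}

theorem eq_top_of_index_prime_of_le (hp : N.index.Prime) {H : Subgroup G} (hNH : N ≤ H)
    {g : G} (hgH : g ∈ H) (hgN : g ∉ N) : H = ⊤ := by
  have hmul := relIndex_mul_index hNH
  rcases hp.eq_one_or_self_of_dvd _ (Dvd.intro_left _ hmul) with h | h
  · exact index_eq_one.mp h
  · rw [h, Nat.mul_eq_right hp.ne_zero, relIndex_eq_one] at hmul
    exact absurd (hmul hgH) hgN

theorem exists_notMem_of_index_prime (hp : N.index.Prime) : ∃ t, t ∉ N := by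
  by_contra! h
  rw [(eq_top_iff' N).mpr h, index_top] at hp
  exact Nat.not_prime_one hp

theorem mem_center_of_commute_of_notMem (hN : ∀ a ∈ N, ∀ b ∈ N, a * b = b * a)
    (hp : N.index.Prime) {a x : G} (ha : a ∈ N) (hx : x ∉ N) (hax : Commute a x) :
    a ∈ center G := by
  have hNC : N ≤ centralizer {a} := fun b hb => mem_centralizer_singleton_iff.mpr (hN b hb a ha)
  have hC : centralizer {a} = ⊤ :=
    eq_top_of_index_prime_of_le hp hNC (mem_centralizer_singleton_iff.mpr hax.symm.eq) hx
  exact mem_center_iff.mpr fun g =>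
    mem_centralizer_singleton_iff.mp (hC ▸ mem_top g : g ∈ centralizer {a})

theorem commute_of_commute_of_notMem [N.Normal] (hN : ∀ a ∈ N, ∀ b ∈ N, a * b = b * a)
    (hp : N.index.Prime) {c x y : G} (hc : c ∉ N) (hx : Commute c x) (hy : Commute c y) :
    Commute x y := by
  have : Fact N.index.Prime := ⟨hp⟩
  have : IsCyclic (G ⧸ N) := isCyclic_of_prime_card (p := N.index) rfl
  let C := centralizer ({c} : Set G)
  let f : C →* G ⧸ N := (QuotientGroup.mk' N).comp C.subtype
  have hker : f.ker ≤ center C := fun g hg => by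
    have hgN : (g : G) ∈ N := by simpa [f, QuotientGroup.eq_one_iff] using hg
    have hgZ := mem_center_of_commute_of_notMem hN hp hgN hc (mem_centralizer_singleton_iff.mp g.2)
    exact mem_center_iff.mpr fun h => Subtype.ext (mem_center_iff.mp hgZ h)
  have hC := f.isMulCommutative_of_isCyclic_of_ker_le_center hker
  exact congrArg Subtype.val (hC.is_comm.comm
    (⟨x, mem_centralizer_singleton_iff.mpr hx.symm.eq⟩ : C)
    ⟨y, mem_centralizer_singleton_iff.mpr hy.symm.eq⟩)

theorem exists_commute_mul_mem [N.Normal] (hp : N.index.Prime) (t : G) {x : G} (hx : x ∉ N) :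
    ∃ n ∈ N, Commute x (t * n) := by
  have hsup : N ⊔ centralizer {x} = ⊤ :=
    eq_top_of_index_prime_of_le hp le_sup_left
      (mem_sup_right (mem_centralizer_singleton_iff.mpr rfl)) hx
  obtain ⟨n, hn, y, hy, hny⟩ :=
    mem_sup_of_normal_left.mp (hsup ▸ mem_top t⁻¹ : t⁻¹ ∈ N ⊔ _)
  have hty : t * n = y⁻¹ := by rw [← inv_inv t, ← hny]; group
  exact ⟨n, hn, hty ▸ Commute.inv_right (Commute.symm (mem_centralizer_singleton_iff.mp hy))⟩

theorem exists_mem_notMem_center [N.Normal] (hN : ∀ a ∈ N, ∀ b ∈ N, a * b = b * a)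
    (hp : N.index.Prime) (hna : ¬ ∀ a b : G, a * b = b * a) : ∃ a ∈ N, a ∉ center G := by
  obtain ⟨t, ht⟩ := exists_notMem_of_index_prime hp
  by_contra! hNZ
  have hC : centralizer {t} = ⊤ :=
    eq_top_of_index_prime_of_le hp (fun a ha => mem_centralizer_singleton_iff.mpr
      (mem_center_iff.mp (hNZ a ha) t).symm) (mem_centralizer_singleton_iff.mpr rfl) ht
  have hcomm (g : G) : Commute t g :=
    (mem_centralizer_singleton_iff.mp (hC ▸ mem_top g : g ∈ centralizer {t})).symm
  exact hna fun a b => commute_of_commute_of_notMem hN hp ht (hcomm a) (hcomm b)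

noncomputable def centerTransversal (N : Subgroup G) (t : G) :
    N ⧸ (center G).subgroupOf N → G :=
  fun q => t * (q.out : G)

theorem centerTransversal_notMem {t : G} (ht : t ∉ N) (q : N ⧸ (center G).subgroupOf N) :
    centerTransversal N t q ∉ N := fun h =>
  ht (by simpa [centerTransversal] using N.mul_mem h (N.inv_mem q.out.2))

theorem centerTransversal_injective (t : G) : Function.Injective (centerTransversal N t) :=
  fun q q' h => by
    rw [← q.out_eq', ← q'.out_eq', Subtype.ext (mul_left_cancel h)]

theorem not_commute_centerTransversal (hN : ∀ a ∈ N, ∀ b ∈ N, a * b = b * a)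
    (hp : N.index.Prime) {t : G} (ht : t ∉ N) {q q' : N ⧸ (center G).subgroupOf N}
    (hqq : q ≠ q') : ¬ Commute (centerTransversal N t q) (centerTransversal N t q') := by
  intro h
  have hnm : Commute (q.out : G) q'.out := hN _ q.out.2 _ q'.out.2
  have hmn : (q'.out : G)⁻¹ * q.out ∈ N := N.mul_mem (N.inv_mem q'.out.2) q.out.2
  have hZ := mem_center_of_commute_of_notMem hN hp hmn ht (hnm.inv_mul_of_mul_left h).symm
  apply hqq.symm
  rw [← q.out_eq', ← q'.out_eq']
  exact QuotientGroup.eq.mpr (mem_subgroupOf.mpr (by simpa using hZ))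

theorem exists_commute_centerTransversal [N.Normal] (hp : N.index.Prime) (t : G) {x : G}
    (hx : x ∉ N) : ∃ q, Commute x (centerTransversal N t q) := by
  obtain ⟨n, hn, hxn⟩ := exists_commute_mul_mem hp t hx
  obtain ⟨z, hz⟩ := QuotientGroup.mk_out_eq_mul ((center G).subgroupOf N) ⟨n, hn⟩
  refine ⟨QuotientGroup.mk ⟨n, hn⟩, ?_⟩
  rw [centerTransversal, hz, coe_mul, ← mul_assoc]
  exact hxn.mul_right (mem_center_iff.mp (mem_subgroupOf.mp z.2) x)

end Subgroup

theorem Finset.card_le_of_pairwise_not_commute {G ι : Type*} [Group G] [Finite ι]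
    {S : Finset G} (hS : (S : Set G).Pairwise fun x y => ¬ Commute x y) (r : ι → G)
    (hr : ∀ i x y, Commute (r i) x → Commute (r i) y → Commute x y)
    (hcover : ∀ x ∈ S, ∃ i, Commute x (r i)) : S.card ≤ Nat.card ι := by
  choose f hf using hcover
  rw [← Nat.card_eq_finsetCard]
  refine Nat.card_le_card_of_injective (fun x : S => f x x.2) fun x y hxy => ?_
  by_contra hne
  refine hS x.2 y.2 (Subtype.coe_ne_coe.mpr hne) (hr (f x x.2) _ _ (hf x x.2).symm ?_)
  rw [show f x x.2 = f y y.2 from hxy]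
  exact (hf y y.2).symm

namespace Subgroup

variable {G : Type*} [Group G] [Finite G] {N : Subgroup G} [N.Normal]

theorem card_le_relIndex_center_add_one (hN : ∀ a ∈ N, ∀ b ∈ N, a * b = b * a)
    (hp : N.index.Prime) {S : Finset G} (hS : (S : Set G).Pairwise fun x y => ¬ Commute x y) :
    S.card ≤ (center G).relIndex N + 1 := by
  classical
  obtain ⟨t, ht⟩ := exists_notMem_of_index_prime hp
  have hin : (S.filter (· ∈ N)).card ≤ 1 := Finset.card_le_one.mpr fun x hx y hy => by
    rw [Finset.mem_filter] at hx hy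
    by_contra hxy
    exact hS hx.1 hy.1 hxy (hN x hx.2 y hy.2)
  have hout : (S.filter (· ∉ N)).card ≤ (center G).relIndex N :=
    Finset.card_le_of_pairwise_not_commute (hS.mono (Finset.filter_subset _ S))
      (centerTransversal N t)
      (fun q _ _ => commute_of_commute_of_notMem hN hp (centerTransversal_notMem ht q))
      (fun x hx => exists_commute_centerTransversal hp t (Finset.mem_filter.mp hx).2)
  have := S.card_filter_add_card_filter_not (· ∈ N)
  omega

theorem exists_pairwise_not_commute_card_eq (hN : ∀ a ∈ N, ∀ b ∈ N, a * b = b * a)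
    (hp : N.index.Prime) (hna : ¬ ∀ a b : G, a * b = b * a) :
    ∃ S : Finset G, S.card = (center G).relIndex N + 1 ∧
      (S : Set G).Pairwise fun x y => ¬ Commute x y := by
  classical
  have := Fintype.ofFinite (N ⧸ (center G).subgroupOf N)
  obtain ⟨t, ht⟩ := exists_notMem_of_index_prime hp
  obtain ⟨a, haN, haZ⟩ := exists_mem_notMem_center hN hp hna
  have ha (q) : ¬ Commute a (centerTransversal N t q) := fun h =>
    haZ (mem_center_of_commute_of_notMem hN hp haN (centerTransversal_notMem ht q) h)
  have haT : a ∉ Finset.univ.image (centerTransversal N t) := by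
    simpa using fun q (h : centerTransversal N t q = a) => centerTransversal_notMem ht q (h ▸ haN)
  refine ⟨insert a (Finset.univ.image (centerTransversal N t)), ?_, ?_⟩
  · rw [Finset.card_insert_of_notMem haT,
      Finset.card_image_of_injective _ (centerTransversal_injective t), Finset.card_univ,
      ← Nat.card_eq_fintype_card]
    rfl
  · rw [Finset.coe_insert, Finset.coe_image, Finset.coe_univ, Set.image_univ]
    refine Set.Pairwise.insert ?_ ?_
    · rintro _ ⟨q, rfl⟩ _ ⟨q', rfl⟩ hqq
      exact not_commute_centerTransversal hN hp ht (fun h => hqq (h ▸ rfl))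
    · rintro _ ⟨q, rfl⟩ -
      exact ⟨ha q, fun h => ha q h.symm⟩

end Subgroup

theorem stmt16 (G : Type*) [Group G] [Finite G] (p : ℕ) (hp : p.Prime)
    (hna : ¬ ∀ a b : G, a * b = b * a)
    (N : Subgroup G) (hNn : N.Normal) (hNab : ∀ a ∈ N, ∀ b ∈ N, a * b = b * a)
    (hNi : N.index = p) :
    IsGreatest {n : ℕ | ∃ S : Finset G, S.card = n ∧
        ∀ x ∈ S, ∀ y ∈ S, x ≠ y → ¬ Commute x y}
      ((center G).relIndex N + 1) := by
  have hpN : N.index.Prime := hNi ▸ hp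
  refine ⟨exists_pairwise_not_commute_card_eq hNab hpN hna, ?_⟩
  rintro _ ⟨S, rfl, hS⟩
  exact card_le_relIndex_center_add_one hNab hpN hS
end
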